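/- arXiv:2605.00585 — 8 statements merged into one kernel-verified Lean document; each statement's English description precedes it below -/
import Mathlib

section
/- Under the separable least-squares model assumptions, for every θ = (x, y) with x ∈ Ω and y ∈ ℝ^d, the Jacobian of the residual satisfies ‖J(θ) − J(θ*)‖ ≤ ρ(θ, θ*) = (σ₂‖y*‖ + σ₁)‖x − x*‖ + σ₁‖y − y*‖, where θ* = (x*, y*) and the norm on the left is the ℓ²-operator (spectral) norm. -/
/-!
The parameter space `Θ = Ω × ℝ^d` is modelled as `WithLp 2 (EuclideanSpace ℝ (Fin p) ×
EuclideanSpace ℝ (Fin d))`, so that its norm is the Euclidean (ℓ²) norm of the concatenated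
parameter and operator norms of (Fréchet) derivatives of maps on it are ℓ²-operator
(spectral) norms.  The dictionary `A : ℝ^p → ℝ^{N×d}` is modelled as a map into continuous
linear maps between Euclidean spaces, whose operator norm is the spectral norm.
-/

noncomputable section

abbrev EucSp (n : ℕ) : Type := EuclideanSpace ℝ (Fin n)

/-- The concatenated parameter space `θ = (x, y)` with the Euclidean (ℓ²) product norm. -/
abbrev ThetaSpace (p d : ℕ) : Type := WithLp 2 (EucSp p × EucSp d)

/-- Nonlinear component of a concatenated parameter. -/
def thX {p d : ℕ} (θ : ThetaSpace p d) : EucSp p := (WithLp.equiv 2 (EucSp p × EucSp d) θ).1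

/-- Linear component of a concatenated parameter. -/
def thY {p d : ℕ} (θ : ThetaSpace p d) : EucSp d := (WithLp.equiv 2 (EucSp p × EucSp d) θ).2

/-- Concatenation `θ = (x, y)`. -/
def thMk {p d : ℕ} (x : EucSp p) (y : EucSp d) : ThetaSpace p d :=
  (WithLp.equiv 2 (EucSp p × EucSp d)).symm (x, y)

/-- The residual `r(θ) = z − A(x) y` of the separable model. -/
def resid {p d N : ℕ} (A : EucSp p → (EucSp d →L[ℝ] EucSp N)) (z : EucSp N)
    (θ : ThetaSpace p d) : EucSp N :=
  z - A (thX θ) (thY θ)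

/-!
Write `θ = (x, y)` and let `πₓ, π_y` be the two coordinate projections, both of norm at most one.
The residual is `r(θ) = z − A(πₓθ)(π_yθ)`, so `−J(θ) = A(x) ∘ π_y + DA(x)[πₓ ·] y`, and
`J(θ*) − J(θ) = (A(x) − A(x*)) ∘ π_y + (DA(x) − DA(x*))[πₓ ·] y* + DA(x)[πₓ ·] (y − y*)`.
The mean value inequality on the convex set `Ω` bounds `‖A(x) − A(x*)‖ ≤ σ₁‖x − x*‖` and
`‖DA(x) − DA(x*)‖ ≤ σ₂‖x − x*‖`, and `‖DA(x)‖ ≤ σ₁`.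
-/

section ApplyJacobian

variable {𝕜 Θ E F G : Type*} [NontriviallyNormedField 𝕜]
  [NormedAddCommGroup Θ] [NormedSpace 𝕜 Θ] [NormedAddCommGroup E] [NormedSpace 𝕜 E]
  [NormedAddCommGroup F] [NormedSpace 𝕜 F] [NormedAddCommGroup G] [NormedSpace 𝕜 G]

/-- The derivative of `θ ↦ A (πx θ) (πy θ)` at a point where `A = a`, `DA = b`, `πy θ = y`. -/
def applyJacobian (πx : Θ →L[𝕜] E) (πy : Θ →L[𝕜] F) (a : F →L[𝕜] G)
    (b : E →L[𝕜] F →L[𝕜] G) (y : F) : Θ →L[𝕜] G :=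
  a.comp πy + (b.comp πx).flip y

variable {πx : Θ →L[𝕜] E} {πy : Θ →L[𝕜] F}

theorem hasFDerivAt_apply_apply {A : E → F →L[𝕜] G} {θ : Θ}
    (hA : DifferentiableAt 𝕜 A (πx θ)) :
    HasFDerivAt (fun θ => A (πx θ) (πy θ))
      (applyJacobian πx πy (A (πx θ)) (fderiv 𝕜 A (πx θ)) (πy θ)) θ :=
  (hA.hasFDerivAt.comp θ πx.hasFDerivAt).clm_apply πy.hasFDerivAt

theorem fderiv_const_sub_apply_apply {A : E → F →L[𝕜] G} {θ : Θ} (z : G)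
    (hA : DifferentiableAt 𝕜 A (πx θ)) :
    fderiv 𝕜 (fun θ => z - A (πx θ) (πy θ)) θ
      = -applyJacobian πx πy (A (πx θ)) (fderiv 𝕜 A (πx θ)) (πy θ) :=
  ((hasFDerivAt_apply_apply hA).const_sub z).fderiv

theorem applyJacobian_sub (a a' : F →L[𝕜] G) (b b' : E →L[𝕜] F →L[𝕜] G) (y y' : F) :
    applyJacobian πx πy a b y - applyJacobian πx πy a' b' y'
      = applyJacobian πx πy (a - a') (b - b') y' + applyJacobian πx πy 0 b (y - y') := by
  ext v
  simp only [applyJacobian, sub_apply, add_apply, ContinuousLinearMap.comp_apply,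
    ContinuousLinearMap.flip_apply, ContinuousLinearMap.sub_comp, ContinuousLinearMap.zero_comp,
    map_sub, zero_add]
  abel

theorem norm_applyJacobian_le (hπx : ‖πx‖ ≤ 1) (hπy : ‖πy‖ ≤ 1)
    (a : F →L[𝕜] G) (b : E →L[𝕜] F →L[𝕜] G) (y : F) :
    ‖applyJacobian πx πy a b y‖ ≤ ‖a‖ + ‖b‖ * ‖y‖ :=
  calc ‖applyJacobian πx πy a b y‖ ≤ ‖a‖ * ‖πy‖ + ‖b‖ * ‖πx‖ * ‖y‖ := by
        refine (norm_add_le _ _).trans (add_le_add (a.opNorm_comp_le πy) ?_)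
        calc ‖(b.comp πx).flip y‖ ≤ ‖(b.comp πx).flip‖ * ‖y‖ := (b.comp πx).flip.le_opNorm y
          _ ≤ ‖b‖ * ‖πx‖ * ‖y‖ := by
            rw [ContinuousLinearMap.opNorm_flip]; gcongr; exact b.opNorm_comp_le πx
    _ ≤ ‖a‖ * 1 + ‖b‖ * 1 * ‖y‖ := by gcongr
    _ = ‖a‖ + ‖b‖ * ‖y‖ := by ring

theorem norm_applyJacobian_sub_le (hπx : ‖πx‖ ≤ 1) (hπy : ‖πy‖ ≤ 1)
    (a a' : F →L[𝕜] G) (b b' : E →L[𝕜] F →L[𝕜] G) (y y' : F) :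
    ‖applyJacobian πx πy a b y - applyJacobian πx πy a' b' y'‖
      ≤ ‖a - a'‖ + ‖b - b'‖ * ‖y'‖ + ‖b‖ * ‖y - y'‖ := by
  have h₁ := norm_applyJacobian_le hπx hπy (a - a') (b - b') y'
  have h₀ := norm_applyJacobian_le hπx hπy 0 b (y - y')
  rw [norm_zero, zero_add] at h₀
  rw [applyJacobian_sub]
  exact (norm_add_le _ _).trans (by linarith)

theorem WithLp.norm_fstL_le : ‖WithLp.fstL 2 𝕜 E F‖ ≤ 1 :=
  ContinuousLinearMap.opNorm_le_bound _ zero_le_one fun v => by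
    simpa using WithLp.norm_fst_le _ v

theorem WithLp.norm_sndL_le : ‖WithLp.sndL 2 𝕜 E F‖ ≤ 1 :=
  ContinuousLinearMap.opNorm_le_bound _ zero_le_one fun v => by
    simpa using WithLp.norm_snd_le _ v

end ApplyJacobian

section MeanValue

variable {E F : Type*} [NormedAddCommGroup E] [NormedSpace ℝ E] [NormedAddCommGroup F]
  [NormedSpace ℝ F] {f : E → F} {s : Set E} {C : ℝ} {x y : E}

theorem Convex.norm_image_sub_le_of_norm_iteratedFDeriv_one_le (hs : Convex ℝ s)
    (hf : Differentiable ℝ f) (hC : ∀ u ∈ s, ‖iteratedFDeriv ℝ 1 f u‖ ≤ C)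
    (hx : x ∈ s) (hy : y ∈ s) : ‖f y - f x‖ ≤ C * ‖y - x‖ :=
  hs.norm_image_sub_le_of_norm_fderiv_le (fun u _ => hf u)
    (fun u hu => by simpa using hC u hu) hx hy

theorem Convex.norm_fderiv_sub_le_of_norm_iteratedFDeriv_two_le (hs : Convex ℝ s)
    (hf : ContDiff ℝ 2 f) (hC : ∀ u ∈ s, ‖iteratedFDeriv ℝ 2 f u‖ ≤ C)
    (hx : x ∈ s) (hy : y ∈ s) : ‖fderiv ℝ f y - fderiv ℝ f x‖ ≤ C * ‖y - x‖ :=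
  hs.norm_image_sub_le_of_norm_iteratedFDeriv_one_le
    ((hf.fderiv_right (m := 1) le_rfl).differentiable one_ne_zero)
    (fun u hu => by rw [norm_iteratedFDeriv_fderiv]; exact hC u hu) hx hy

end MeanValue

theorem fderiv_resid {p d N : ℕ} {A : EucSp p → (EucSp d →L[ℝ] EucSp N)}
    (hA : Differentiable ℝ A) (z : EucSp N) (x : EucSp p) (y : EucSp d) :
    fderiv ℝ (resid A z) (thMk x y)
      = -applyJacobian (WithLp.fstL 2 ℝ (EucSp p) (EucSp d))
          (WithLp.sndL 2 ℝ (EucSp p) (EucSp d)) (A x) (fderiv ℝ A x) y :=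
  fderiv_const_sub_apply_apply (πx := WithLp.fstL 2 ℝ (EucSp p) (EucSp d))
    (πy := WithLp.sndL 2 ℝ (EucSp p) (EucSp d)) z (hA x)

theorem jacobian_perturbation_bound_general
    {p d N : ℕ}
    (Ω : Set (EucSp p)) (hΩconv : Convex ℝ Ω)
    (A : EucSp p → (EucSp d →L[ℝ] EucSp N)) (hA : ContDiff ℝ 3 A)
    (σ1 σ2 : ℝ)
    (hσ1 : ∀ x ∈ Ω, ‖iteratedFDeriv ℝ 1 A x‖ ≤ σ1)
    (hσ2 : ∀ x ∈ Ω, ‖iteratedFDeriv ℝ 2 A x‖ ≤ σ2)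
    (xs : EucSp p) (hxs : xs ∈ Ω) (ys : EucSp d) (w : EucSp N)
    (x : EucSp p) (hx : x ∈ Ω) (y : EucSp d) :
    ‖fderiv ℝ (resid A (A xs ys + w)) (thMk x y)
        - fderiv ℝ (resid A (A xs ys + w)) (thMk xs ys)‖
      ≤ (σ2 * ‖ys‖ + σ1) * ‖x - xs‖ + σ1 * ‖y - ys‖ := by
  have hDA : Differentiable ℝ A := hA.differentiable (by norm_num)
  have hA_lip := hΩconv.norm_image_sub_le_of_norm_iteratedFDeriv_one_le hDA hσ1 hxs hx
  have hDA_lip := hΩconv.norm_fderiv_sub_le_of_norm_iteratedFDeriv_two_le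
    (hA.of_le (by norm_num)) hσ2 hxs hx
  have hDA_le : ‖fderiv ℝ A x‖ ≤ σ1 := by simpa using hσ1 x hx
  rw [fderiv_resid hDA, fderiv_resid hDA, neg_sub_neg, norm_sub_rev]
  calc _ ≤ ‖A x - A xs‖ + ‖fderiv ℝ A x - fderiv ℝ A xs‖ * ‖ys‖
          + ‖fderiv ℝ A x‖ * ‖y - ys‖ :=
        -- naming the projections spares the unifier a search through the `WithLp` instances
        norm_applyJacobian_sub_le (πx := WithLp.fstL 2 ℝ (EucSp p) (EucSp d))
          (πy := WithLp.sndL 2 ℝ (EucSp p) (EucSp d)) WithLp.norm_fstL_le WithLp.norm_sndL_le ..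
    _ ≤ σ1 * ‖x - xs‖ + σ2 * ‖x - xs‖ * ‖ys‖ + σ1 * ‖y - ys‖ := by gcongr
    _ = (σ2 * ‖ys‖ + σ1) * ‖x - xs‖ + σ1 * ‖y - ys‖ := by ring

/-- **Jacobian perturbation bound.**  Under the separable least-squares model assumptions,
for every `θ = (x, y)` with `x ∈ Ω`, the Jacobian `J(θ) = D r(θ)` of the residual satisfies
`‖J(θ) − J(θ*)‖ ≤ ρ(θ, θ*) = (σ₂‖y*‖ + σ₁)‖x − x*‖ + σ₁‖y − y*‖`. -/
theorem jacobian_perturbation_bound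
    {p d N : ℕ}
    (Ω : Set (EucSp p)) (hΩconv : Convex ℝ Ω) (hΩcomp : IsCompact Ω)
    (A : EucSp p → (EucSp d →L[ℝ] EucSp N)) (hA : ContDiff ℝ 3 A)
    (σ0 σ1 σ2 σ3 : ℝ)
    (hσ0 : ∀ x ∈ Ω, ‖A x‖ ≤ σ0)
    (hσ1 : ∀ x ∈ Ω, ‖iteratedFDeriv ℝ 1 A x‖ ≤ σ1)
    (hσ2 : ∀ x ∈ Ω, ‖iteratedFDeriv ℝ 2 A x‖ ≤ σ2)
    (hσ3 : ∀ x ∈ Ω, ‖iteratedFDeriv ℝ 3 A x‖ ≤ σ3)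
    (xs : EucSp p) (hxs : xs ∈ Ω) (ys : EucSp d) (w : EucSp N)
    (x : EucSp p) (hx : x ∈ Ω) (y : EucSp d) :
    ‖fderiv ℝ (resid A (A xs ys + w)) (thMk x y)
        - fderiv ℝ (resid A (A xs ys + w)) (thMk xs ys)‖
      ≤ (σ2 * ‖ys‖ + σ1) * ‖x - xs‖ + σ1 * ‖y - ys‖ :=
  jacobian_perturbation_bound_general Ω hΩconv A hA σ1 σ2 hσ1 hσ2 xs hxs ys w x hx y
end
end

section
/- Under the separable least-squares model assumptions, the residual part of the Hessian H_r(θ) = Σ_{ℓ=1}^N r_ℓ(θ)·∇²r_ℓ(θ) satisfies, for every θ = (x, y) with x ∈ Ω and y ∈ ℝ^d, the perturbation bound ‖H_r(θ) − H_r(θ*)‖ ≤ c_{r,0}·ρ₁(θ, θ*) + (‖w‖ + ρ₁(θ, θ*))·ρ₂(θ, θ*), where c_{r,0} = σ₂‖y*‖ + 2σ₁, ρ₁(θ, θ*) = σ₁‖y*‖‖x − x*‖ + σ₀‖y − y*‖, ρ₂(θ, θ*) = (σ₃‖y*‖ + σ₂)‖x − x*‖ + 2σ₂‖y − y*‖,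 and the norm on the left is the spectral norm. -/
/-!
STATEMENT 2: Perturbation bound for the residual part of the Hessian.

The parameter space is `ThetaSpace p d = WithLp 2 (ℝ^p ×ₗ² ℝ^d)` (Euclidean norm on the
concatenation), so that the operator norm of the bilinear form
`H_r(θ) = Σ_ℓ r_ℓ(θ)·∇²r_ℓ(θ)` is the spectral norm of the corresponding symmetric matrix.
-/

noncomputable section

/-- The residual part of the Hessian, `H_r(θ) = Σ_{ℓ=1}^N r_ℓ(θ)·∇²r_ℓ(θ)`, as a (continuous)
bilinear form on the parameter space. -/
def residHess {p d N : ℕ} (A : EucSp p → (EucSp d →L[ℝ] EucSp N)) (z : EucSp N)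
    (θ : ThetaSpace p d) : ThetaSpace p d →L[ℝ] ThetaSpace p d →L[ℝ] ℝ :=
  ∑ ℓ : Fin N, (resid A z θ ℓ) • fderiv ℝ (fderiv ℝ (fun t => resid A z t ℓ)) θ

/-!
Write `F(θ) = A(x) y`, so that `r = z - F`. Since `∇²r_ℓ` is the `ℓ`-th component of `D²r = -D²F`,
`H_r(θ)(u, v) = ⟪r(θ), D²r(θ)(u, v)⟫`, and therefore
`H_r(θ) - H_r(θ*) = ⟪r(θ) - r(θ*), D²r(θ*)⟫ + ⟪r(θ), D²r(θ) - D²r(θ*)⟫`.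
Here `r(θ*) = w` and `‖r(θ) - r(θ*)‖ = ‖A(x) y - A(x*) y*‖ ≤ ρ₁`. Moreover
`D²F(θ)(u, v) = DA(x) u_x v_y + DA(x) v_x u_y + D²A(x)(u_x, v_x) y`, and since
`‖u_x‖ ‖v_y‖ + ‖v_x‖ ‖u_y‖ ≤ ‖u‖ ‖v‖` this has norm at most `σ₁ + σ₂ ‖y*‖` at `θ*` and varies by at
most `ρ₂`. The mean value inequality on the convex set `Ω` turns the bounds on `DA`, `D²A`, `D³A`
into Lipschitz bounds on `A`, `DA`, `D²A`.
-/

namespace SeparableLeastSquares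

open ContinuousLinearMap
open scoped RealInnerProductSpace

section ProdL2

variable {E F : Type*} [SeminormedAddCommGroup E] [SeminormedAddCommGroup F]

theorem norm_fst_mul_norm_snd_add_le (u v : WithLp 2 (E × F)) :
    ‖u.fst‖ * ‖v.snd‖ + ‖v.fst‖ * ‖u.snd‖ ≤ ‖u‖ * ‖v‖ := by
  have hu := WithLp.prod_norm_sq_eq_of_L2 u
  have hv := WithLp.prod_norm_sq_eq_of_L2 v
  -- Cauchy–Schwarz in `ℝ²` for `(‖u.fst‖, ‖u.snd‖)` and `(‖v.snd‖, ‖v.fst‖)`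
  rw [← pow_le_pow_iff_left₀ (by positivity) (by positivity) two_ne_zero, mul_pow, hu, hv]
  nlinarith [sq_nonneg (‖u.fst‖ * ‖v.fst‖ - ‖u.snd‖ * ‖v.snd‖)]

theorem norm_fst_mul_norm_fst_le (u v : WithLp 2 (E × F)) : ‖u.fst‖ * ‖v.fst‖ ≤ ‖u‖ * ‖v‖ :=
  mul_le_mul (WithLp.norm_fst_le E u) (WithLp.norm_fst_le E v) (norm_nonneg _) (norm_nonneg _)

end ProdL2

variable {E F G : Type*} [NormedAddCommGroup E] [NormedSpace ℝ E] [NormedAddCommGroup F]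
  [NormedSpace ℝ F] [NormedAddCommGroup G] [NormedSpace ℝ G]

theorem norm_apply_sub_apply_le (L L' : F →L[ℝ] G) (y y' : F) :
    ‖L y - L' y'‖ ≤ ‖L - L'‖ * ‖y'‖ + ‖L‖ * ‖y - y'‖ := by
  rw [show L y - L' y' = (L - L') y' + L (y - y') by simp]
  exact (norm_add_le _ _).trans (add_le_add ((L - L').le_opNorm y') (L.le_opNorm _))

theorem norm_apply_two_le (M : ContinuousMultilinearMap ℝ (fun _ : Fin 2 => E) G) (a b : E) :
    ‖M ![a, b]‖ ≤ ‖M‖ * (‖a‖ * ‖b‖) := by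
  simpa [Fin.prod_univ_two] using M.le_opNorm ![a, b]

theorem opNorm_le_of_norm_apply_sub_le {B : WithLp 2 (E × F) →L[ℝ] WithLp 2 (E × F) →L[ℝ] G}
    (L : E →L[ℝ] F →L[ℝ] G) {c : ℝ} (hc : 0 ≤ c)
    (hB : ∀ u v, ‖B u v - (L u.fst v.snd + L v.fst u.snd)‖ ≤ c * (‖u.fst‖ * ‖v.fst‖)) :
    ‖B‖ ≤ ‖L‖ + c := by
  refine opNorm_le_bound₂ B (by positivity) fun u v => ?_
  have hL : ‖L u.fst v.snd + L v.fst u.snd‖ ≤ ‖L‖ * (‖u.fst‖ * ‖v.snd‖ + ‖v.fst‖ * ‖u.snd‖) := by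
    refine (norm_add_le _ _).trans ?_
    rw [mul_add, ← mul_assoc, ← mul_assoc]
    exact add_le_add (L.le_opNorm₂ _ _) (L.le_opNorm₂ _ _)
  calc ‖B u v‖
      ≤ ‖L‖ * (‖u.fst‖ * ‖v.snd‖ + ‖v.fst‖ * ‖u.snd‖) + c * (‖u.fst‖ * ‖v.fst‖) :=
        (norm_le_norm_add_norm_sub' _ _).trans (add_le_add hL (hB u v))
    _ ≤ ‖L‖ * (‖u‖ * ‖v‖) + c * (‖u‖ * ‖v‖) := by
        gcongr ‖L‖ * ?_ + c * ?_
        · exact norm_fst_mul_norm_snd_add_le u v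
        · exact norm_fst_mul_norm_fst_le u v
    _ = (‖L‖ + c) * ‖u‖ * ‖v‖ := by ring

theorem Convex.norm_iteratedFDeriv_sub_le {f : E → F} {s : Set E} {k : ℕ} {C : ℝ} {x y : E}
    (hs : Convex ℝ s) (hf : ContDiff ℝ (k + 1) f)
    (hC : ∀ x ∈ s, ‖iteratedFDeriv ℝ (k + 1) f x‖ ≤ C) (hx : x ∈ s) (hy : y ∈ s) :
    ‖iteratedFDeriv ℝ k f y - iteratedFDeriv ℝ k f x‖ ≤ C * ‖y - x‖ := by
  refine hs.norm_image_sub_le_of_norm_fderiv_le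
    (fun t _ => hf.differentiable_iteratedFDeriv (by norm_cast; omega) t) (fun t ht => ?_) hx hy
  rw [norm_fderiv_iteratedFDeriv]
  exact hC t ht

theorem norm_iteratedFDeriv_zero_sub (f : E → F) (x y : E) :
    ‖iteratedFDeriv ℝ 0 f y - iteratedFDeriv ℝ 0 f x‖ = ‖f y - f x‖ := by
  simp only [iteratedFDeriv_zero_eq_comp, Function.comp_apply, ← map_sub,
    LinearIsometryEquiv.norm_map]

theorem norm_iteratedFDeriv_one_sub (f : E → F) (x y : E) :
    ‖iteratedFDeriv ℝ 1 f y - iteratedFDeriv ℝ 1 f x‖ = ‖fderiv ℝ f y - fderiv ℝ f x‖ := by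
  simp only [iteratedFDeriv_succ_eq_comp_right, iteratedFDeriv_zero_eq_comp, Function.comp_apply]
  rw [← LinearIsometryEquiv.map_sub, ← LinearIsometryEquiv.map_sub, LinearIsometryEquiv.norm_map,
    LinearIsometryEquiv.norm_map]

theorem norm_sub_le_of_apply_eq_inner {T H : Type*} [NormedAddCommGroup T] [NormedSpace ℝ T]
    [NormedAddCommGroup H] [InnerProductSpace ℝ H] {Φ Φ' : T →L[ℝ] T →L[ℝ] ℝ} {r r' : H}
    {B B' : T →L[ℝ] T →L[ℝ] H} (hΦ : ∀ u v, Φ u v = ⟪r, B u v⟫)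
    (hΦ' : ∀ u v, Φ' u v = ⟪r', B' u v⟫) :
    ‖Φ - Φ'‖ ≤ ‖r - r'‖ * ‖B'‖ + ‖r‖ * ‖B - B'‖ := by
  refine opNorm_le_bound₂ _ (by positivity) fun u v => ?_
  have hsplit : (Φ - Φ') u v = ⟪r - r', B' u v⟫ + ⟪r, (B - B') u v⟫ := by
    simp only [sub_apply, hΦ, hΦ', inner_sub_left, inner_sub_right]
    ring
  calc ‖(Φ - Φ') u v‖ ≤ ‖r - r'‖ * ‖B' u v‖ + ‖r‖ * ‖(B - B') u v‖ := by
        rw [hsplit, Real.norm_eq_abs]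
        exact (abs_add_le _ _).trans
          (add_le_add (abs_real_inner_le_norm _ _) (abs_real_inner_le_norm _ _))
    _ ≤ ‖r - r'‖ * (‖B'‖ * ‖u‖ * ‖v‖) + ‖r‖ * (‖B - B'‖ * ‖u‖ * ‖v‖) := by
        gcongr <;> exact le_opNorm₂ _ _ _
    _ = (‖r - r'‖ * ‖B'‖ + ‖r‖ * ‖B - B'‖) * ‖u‖ * ‖v‖ := by ring

theorem fderiv_fderiv_clm_comp_apply {T H : Type*} [NormedAddCommGroup T] [NormedSpace ℝ T]
    [NormedAddCommGroup H] [NormedSpace ℝ H] (L : G →L[ℝ] H) {f : T → G} (hf : ContDiff ℝ 2 f)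
    (θ u v : T) :
    fderiv ℝ (fderiv ℝ (fun t => L (f t))) θ u v = L (fderiv ℝ (fderiv ℝ f) θ u v) := by
  have hDf : fderiv ℝ (fun t => L (f t)) = fun t => L.comp (fderiv ℝ f t) :=
    funext fun t => (L.hasFDerivAt.comp t (hf.differentiable (by norm_num) t).hasFDerivAt).fderiv
  have hD2f := ((compL ℝ T G H L).hasFDerivAt.comp θ
    ((hf.fderiv_right (m := 1) (by norm_num)).differentiable one_ne_zero θ).hasFDerivAt).fderiv
  rw [hDf]
  exact congr($hD2f u v)

theorem sum_smul_fderiv_fderiv_apply {T ι : Type*} [NormedAddCommGroup T] [NormedSpace ℝ T]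
    [Fintype ι] {r : T → EuclideanSpace ℝ ι} (hr : ContDiff ℝ 2 r) (θ u v : T) :
    (∑ ℓ, r θ ℓ • fderiv ℝ (fderiv ℝ (fun t => r t ℓ)) θ) u v
      = ⟪r θ, fderiv ℝ (fderiv ℝ r) θ u v⟫ := by
  simp only [sum_apply, smul_apply, smul_eq_mul, PiLp.inner_apply, RCLike.inner_apply,
    conj_trivial]
  refine Finset.sum_congr rfl fun ℓ _ => ?_
  rw [mul_comm]
  congr 1
  exact fderiv_fderiv_clm_comp_apply (EuclideanSpace.proj ℓ) hr θ u v

section SeparableMap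

variable {A : E → F →L[ℝ] G}

theorem hasFDerivAt_apply_fst_snd {A' : E →L[ℝ] F →L[ℝ] G} {θ : WithLp 2 (E × F)}
    (hA : HasFDerivAt A A' θ.fst) :
    HasFDerivAt (fun t : WithLp 2 (E × F) => A t.fst t.snd)
      ((A θ.fst).comp (WithLp.sndL 2 ℝ E F) + (A'.comp (WithLp.fstL 2 ℝ E F)).flip θ.snd) θ :=
  (hA.comp θ (WithLp.fstL 2 ℝ E F).hasFDerivAt).clm_apply (WithLp.sndL 2 ℝ E F).hasFDerivAt

theorem contDiff_apply_fst_snd {n : WithTop ℕ∞} (hA : ContDiff ℝ n A) :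
    ContDiff ℝ n (fun t : WithLp 2 (E × F) => A t.fst t.snd) :=
  (hA.comp (WithLp.fstL 2 ℝ E F).contDiff).clm_apply (WithLp.sndL 2 ℝ E F).contDiff

theorem fderiv_fderiv_apply_fst_snd_apply (hA : ContDiff ℝ 2 A) (θ u v : WithLp 2 (E × F)) :
    fderiv ℝ (fderiv ℝ (fun t : WithLp 2 (E × F) => A t.fst t.snd)) θ u v =
      fderiv ℝ A θ.fst u.fst v.snd + fderiv ℝ A θ.fst v.fst u.snd
        + iteratedFDeriv ℝ 2 A θ.fst ![u.fst, v.fst] θ.snd := by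
  have hA₁ : Differentiable ℝ A := hA.differentiable (by norm_num)
  have hA₂ : Differentiable ℝ (fderiv ℝ A) :=
    (hA.fderiv_right (m := 1) (by norm_num)).differentiable one_ne_zero
  have hDF : ∀ t, fderiv ℝ (fun t : WithLp 2 (E × F) => A t.fst t.snd) t v
      = fderiv ℝ A t.fst v.fst t.snd + A t.fst v.snd := fun t => by
    simp [(hasFDerivAt_apply_fst_snd (hA₁ t.fst).hasFDerivAt).fderiv, add_comm]
  -- differentiate `t ↦ D F(t) v` instead of the operator-valued `t ↦ D F(t)`
  have hD2F : (fderiv ℝ (fderiv ℝ (fun t : WithLp 2 (E × F) => A t.fst t.snd)) θ).flip v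
      = fderiv ℝ (fun t => fderiv ℝ A t.fst v.fst t.snd + A t.fst v.snd) θ := by
    rw [← funext hDF, fderiv_clm_apply (((contDiff_apply_fst_snd hA).fderiv_right (m := 1)
      (by norm_num)).differentiable one_ne_zero θ) (differentiableAt_const v)]
    simp
  have h₁ : HasFDerivAt (fun t : WithLp 2 (E × F) => fderiv ℝ A t.fst v.fst t.snd) _ θ :=
    hasFDerivAt_apply_fst_snd ((hA₂ θ.fst).hasFDerivAt.clm_apply (hasFDerivAt_const v.fst _))
  have h₂ : HasFDerivAt (fun t : WithLp 2 (E × F) => A t.fst v.snd) _ θ :=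
    ((hA₁ θ.fst).hasFDerivAt.comp θ (WithLp.fstL 2 ℝ E F).hasFDerivAt).clm_apply
      (hasFDerivAt_const v.snd θ)
  rw [← flip_apply, hD2F, (h₁.fun_add h₂).fderiv, iteratedFDeriv_two_apply]
  simp
  abel

theorem norm_fderiv_fderiv_apply_fst_snd_le (hA : ContDiff ℝ 2 A) (θ : WithLp 2 (E × F)) :
    ‖fderiv ℝ (fderiv ℝ (fun t : WithLp 2 (E × F) => A t.fst t.snd)) θ‖
      ≤ ‖fderiv ℝ A θ.fst‖ + ‖iteratedFDeriv ℝ 2 A θ.fst‖ * ‖θ.snd‖ := by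
  refine opNorm_le_of_norm_apply_sub_le _ (by positivity) fun u v => ?_
  rw [fderiv_fderiv_apply_fst_snd_apply hA, add_sub_cancel_left]
  calc ‖iteratedFDeriv ℝ 2 A θ.fst ![u.fst, v.fst] θ.snd‖
      ≤ ‖iteratedFDeriv ℝ 2 A θ.fst ![u.fst, v.fst]‖ * ‖θ.snd‖ := le_opNorm _ _
    _ ≤ ‖iteratedFDeriv ℝ 2 A θ.fst‖ * (‖u.fst‖ * ‖v.fst‖) * ‖θ.snd‖ := by
        gcongr; exact norm_apply_two_le _ _ _
    _ = _ := by ring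

theorem norm_fderiv_fderiv_apply_fst_snd_sub_le (hA : ContDiff ℝ 2 A) (θ θ' : WithLp 2 (E × F)) :
    ‖fderiv ℝ (fderiv ℝ (fun t : WithLp 2 (E × F) => A t.fst t.snd)) θ
        - fderiv ℝ (fderiv ℝ (fun t : WithLp 2 (E × F) => A t.fst t.snd)) θ'‖
      ≤ ‖fderiv ℝ A θ.fst - fderiv ℝ A θ'.fst‖
        + (‖iteratedFDeriv ℝ 2 A θ.fst - iteratedFDeriv ℝ 2 A θ'.fst‖ * ‖θ'.snd‖
          + ‖iteratedFDeriv ℝ 2 A θ.fst‖ * ‖θ.snd - θ'.snd‖) := by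
  refine opNorm_le_of_norm_apply_sub_le _ (by positivity) fun u v => ?_
  set M := iteratedFDeriv ℝ 2 A θ.fst
  set M' := iteratedFDeriv ℝ 2 A θ'.fst
  rw [sub_apply, sub_apply, fderiv_fderiv_apply_fst_snd_apply hA,
    fderiv_fderiv_apply_fst_snd_apply hA]
  calc _ = ‖M ![u.fst, v.fst] θ.snd - M' ![u.fst, v.fst] θ'.snd‖ := by
        congr 1; simp only [sub_apply]; abel
    _ ≤ ‖(M - M') ![u.fst, v.fst]‖ * ‖θ'.snd‖ + ‖M ![u.fst, v.fst]‖ * ‖θ.snd - θ'.snd‖ :=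
        norm_apply_sub_apply_le _ _ _ _
    _ ≤ ‖M - M'‖ * (‖u.fst‖ * ‖v.fst‖) * ‖θ'.snd‖
          + ‖M‖ * (‖u.fst‖ * ‖v.fst‖) * ‖θ.snd - θ'.snd‖ := by
        gcongr <;> exact norm_apply_two_le _ _ _
    _ = _ := by ring

end SeparableMap

section Residual

variable {p d N : ℕ} {A : EucSp p → (EucSp d →L[ℝ] EucSp N)}

theorem fst_thMk (x : EucSp p) (y : EucSp d) : (thMk x y).fst = x := rfl

theorem snd_thMk (x : EucSp p) (y : EucSp d) : (thMk x y).snd = y := rfl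

theorem norm_resid_sub_le (z : EucSp N) (θ θ' : ThetaSpace p d) :
    ‖resid A z θ - resid A z θ'‖
      ≤ ‖A θ.fst - A θ'.fst‖ * ‖θ'.snd‖ + ‖A θ.fst‖ * ‖θ.snd - θ'.snd‖ := by
  rw [resid, resid, sub_sub_sub_cancel_left, norm_sub_rev]
  exact norm_apply_sub_apply_le _ _ _ _

theorem fderiv_fderiv_resid (z : EucSp N) (θ : ThetaSpace p d) :
    fderiv ℝ (fderiv ℝ (resid A z)) θ
      = -fderiv ℝ (fderiv ℝ (fun t : ThetaSpace p d => A t.fst t.snd)) θ := by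
  have hDr : fderiv ℝ (resid A z)
      = fun t => -fderiv ℝ (fun t : ThetaSpace p d => A t.fst t.snd) t :=
    funext fun t => fderiv_const_sub z
  rw [hDr, fderiv_fun_neg]

theorem residHess_apply (hA : ContDiff ℝ 2 A) (z : EucSp N) (θ u v : ThetaSpace p d) :
    residHess A z θ u v = ⟪resid A z θ, fderiv ℝ (fderiv ℝ (resid A z)) θ u v⟫ :=
  sum_smul_fderiv_fderiv_apply (contDiff_const.sub (contDiff_apply_fst_snd hA)) θ u v

theorem norm_residHess_sub_le (hA : ContDiff ℝ 2 A) (z : EucSp N) (θ θ' : ThetaSpace p d) :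
    ‖residHess A z θ - residHess A z θ'‖
      ≤ ‖resid A z θ - resid A z θ'‖
          * ‖fderiv ℝ (fderiv ℝ (fun t : ThetaSpace p d => A t.fst t.snd)) θ'‖
        + ‖resid A z θ‖ * ‖fderiv ℝ (fderiv ℝ (fun t : ThetaSpace p d => A t.fst t.snd)) θ
            - fderiv ℝ (fderiv ℝ (fun t : ThetaSpace p d => A t.fst t.snd)) θ'‖ := by
  have h := norm_sub_le_of_apply_eq_inner (residHess_apply hA z θ) (residHess_apply hA z θ')
  rw [fderiv_fderiv_resid, fderiv_fderiv_resid, ← neg_sub', opNorm_neg, opNorm_neg] at h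
  exact h

end Residual

end SeparableLeastSquares

open SeparableLeastSquares in
theorem residual_hessian_perturbation_bound_general
    {p d N : ℕ}
    (Ω : Set (EucSp p)) (hΩconv : Convex ℝ Ω)
    (A : EucSp p → (EucSp d →L[ℝ] EucSp N)) (hA : ContDiff ℝ 3 A)
    (σ0 σ1 σ2 σ3 : ℝ)
    (hσ0 : ∀ x ∈ Ω, ‖A x‖ ≤ σ0)
    (hσ1 : ∀ x ∈ Ω, ‖iteratedFDeriv ℝ 1 A x‖ ≤ σ1)
    (hσ2 : ∀ x ∈ Ω, ‖iteratedFDeriv ℝ 2 A x‖ ≤ σ2)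
    (hσ3 : ∀ x ∈ Ω, ‖iteratedFDeriv ℝ 3 A x‖ ≤ σ3)
    (xs : EucSp p) (hxs : xs ∈ Ω) (ys : EucSp d) (w : EucSp N)
    (x : EucSp p) (hx : x ∈ Ω) (y : EucSp d) :
    ‖residHess A (A xs ys + w) (thMk x y) - residHess A (A xs ys + w) (thMk xs ys)‖
      ≤ (σ2 * ‖ys‖ + 2 * σ1) * (σ1 * ‖ys‖ * ‖x - xs‖ + σ0 * ‖y - ys‖)
        + (‖w‖ + (σ1 * ‖ys‖ * ‖x - xs‖ + σ0 * ‖y - ys‖))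
          * ((σ3 * ‖ys‖ + σ2) * ‖x - xs‖ + 2 * σ2 * ‖y - ys‖) := by
  have hA₂ : ContDiff ℝ 2 A := hA.of_le (by norm_num)
  have hA_lip : ‖A x - A xs‖ ≤ σ1 * ‖x - xs‖ := by
    rw [← norm_iteratedFDeriv_zero_sub]
    exact hΩconv.norm_iteratedFDeriv_sub_le (hA.of_le (by norm_num)) hσ1 hxs hx
  have hDA_lip : ‖fderiv ℝ A x - fderiv ℝ A xs‖ ≤ σ2 * ‖x - xs‖ := by
    rw [← norm_iteratedFDeriv_one_sub]
    exact hΩconv.norm_iteratedFDeriv_sub_le hA₂ hσ2 hxs hx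
  have hD2A_lip : ‖iteratedFDeriv ℝ 2 A x - iteratedFDeriv ℝ 2 A xs‖ ≤ σ3 * ‖x - xs‖ :=
    hΩconv.norm_iteratedFDeriv_sub_le hA hσ3 hxs hx
  set z := A xs ys + w
  have hr_star : resid A z (thMk xs ys) = w := add_sub_cancel_left _ _
  have hr_sub : ‖resid A z (thMk x y) - resid A z (thMk xs ys)‖
      ≤ σ1 * ‖ys‖ * ‖x - xs‖ + σ0 * ‖y - ys‖ := by
    refine (norm_resid_sub_le z (thMk x y) (thMk xs ys)).trans ?_
    simp only [fst_thMk, snd_thMk]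
    nlinarith [hσ0 x hx, norm_nonneg ys, norm_nonneg (y - ys)]
  have hr : ‖resid A z (thMk x y)‖ ≤ ‖w‖ + (σ1 * ‖ys‖ * ‖x - xs‖ + σ0 * ‖y - ys‖) := by
    rw [← hr_star]
    exact (norm_le_norm_add_norm_sub' _ _).trans (add_le_add_right hr_sub _)
  have hH_star : ‖fderiv ℝ (fderiv ℝ (fun t : ThetaSpace p d => A t.fst t.snd)) (thMk xs ys)‖
      ≤ σ2 * ‖ys‖ + 2 * σ1 := by
    refine (norm_fderiv_fderiv_apply_fst_snd_le hA₂ (thMk xs ys)).trans ?_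
    have := hσ1 xs hxs
    rw [norm_iteratedFDeriv_one] at this
    simp only [fst_thMk, snd_thMk]
    nlinarith [hσ2 xs hxs, norm_nonneg ys, norm_nonneg (fderiv ℝ A xs)]
  have hH_sub : ‖fderiv ℝ (fderiv ℝ (fun t : ThetaSpace p d => A t.fst t.snd)) (thMk x y)
        - fderiv ℝ (fderiv ℝ (fun t : ThetaSpace p d => A t.fst t.snd)) (thMk xs ys)‖
      ≤ (σ3 * ‖ys‖ + σ2) * ‖x - xs‖ + 2 * σ2 * ‖y - ys‖ := by
    refine (norm_fderiv_fderiv_apply_fst_snd_sub_le hA₂ (thMk x y) (thMk xs ys)).trans ?_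
    simp only [fst_thMk, snd_thMk]
    nlinarith [hσ2 x hx, norm_nonneg (iteratedFDeriv ℝ 2 A x), norm_nonneg ys,
      norm_nonneg (y - ys), norm_nonneg (x - xs)]
  calc _ ≤ _ := norm_residHess_sub_le hA₂ z (thMk x y) (thMk xs ys)
    _ ≤ (σ1 * ‖ys‖ * ‖x - xs‖ + σ0 * ‖y - ys‖) * (σ2 * ‖ys‖ + 2 * σ1)
        + (‖w‖ + (σ1 * ‖ys‖ * ‖x - xs‖ + σ0 * ‖y - ys‖))
          * ((σ3 * ‖ys‖ + σ2) * ‖x - xs‖ + 2 * σ2 * ‖y - ys‖) := by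
        gcongr
        · exact (norm_nonneg _).trans hr_sub
        · exact (norm_nonneg _).trans hr
    _ = _ := by ring

/-- **Residual Hessian perturbation bound.**
`‖H_r(θ) − H_r(θ*)‖ ≤ c_{r,0}·ρ₁(θ,θ*) + (‖w‖ + ρ₁(θ,θ*))·ρ₂(θ,θ*)` with
`c_{r,0} = σ₂‖y*‖ + 2σ₁`, `ρ₁ = σ₁‖y*‖‖x−x*‖ + σ₀‖y−y*‖`, and
`ρ₂ = (σ₃‖y*‖ + σ₂)‖x−x*‖ + 2σ₂‖y−y*‖`. -/
theorem residual_hessian_perturbation_bound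
    {p d N : ℕ}
    (Ω : Set (EucSp p)) (hΩconv : Convex ℝ Ω) (hΩcomp : IsCompact Ω)
    (A : EucSp p → (EucSp d →L[ℝ] EucSp N)) (hA : ContDiff ℝ 3 A)
    (σ0 σ1 σ2 σ3 : ℝ)
    (hσ0 : ∀ x ∈ Ω, ‖A x‖ ≤ σ0)
    (hσ1 : ∀ x ∈ Ω, ‖iteratedFDeriv ℝ 1 A x‖ ≤ σ1)
    (hσ2 : ∀ x ∈ Ω, ‖iteratedFDeriv ℝ 2 A x‖ ≤ σ2)
    (hσ3 : ∀ x ∈ Ω, ‖iteratedFDeriv ℝ 3 A x‖ ≤ σ3)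
    (xs : EucSp p) (hxs : xs ∈ Ω) (ys : EucSp d) (w : EucSp N)
    (x : EucSp p) (hx : x ∈ Ω) (y : EucSp d) :
    ‖residHess A (A xs ys + w) (thMk x y) - residHess A (A xs ys + w) (thMk xs ys)‖
      ≤ (σ2 * ‖ys‖ + 2 * σ1) * (σ1 * ‖ys‖ * ‖x - xs‖ + σ0 * ‖y - ys‖)
        + (‖w‖ + (σ1 * ‖ys‖ * ‖x - xs‖ + σ0 * ‖y - ys‖))
          * ((σ3 * ‖ys‖ + σ2) * ‖x - xs‖ + 2 * σ2 * ‖y - ys‖) :=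
  residual_hessian_perturbation_bound_general Ω hΩconv A hA σ0 σ1 σ2 σ3 hσ0 hσ1 hσ2 hσ3 xs hxs ys w
    x hx y
end
end

section
/- Let M and M' be symmetric real (p+d)×(p+d) matrices written in block form M = [[M_xx, M_xy],[M_yx, M_yy]] and M' = [[M'_xx, M'_xy],[M'_yx, M'_yy]], where M_xx is p×p and M_yy is d×d and invertible. Set C = M_yy⁻¹ M_yx ∈ ℝ^{d×p} and T = [I_p; −C] ∈ ℝ^{(p+d)×p} (identity stacked over −C). Then for every ℓ ∈ {1, …, p}, the eigenvalues (sorted in nondecreasing order) of the symmetric p×p matrices TᵀMT and TᵀM'T satisfy |λ_ℓ(TᵀMT) − λ_ℓ(TᵀM'T)| ≤ (1 + ‖M_xy‖·‖M_yy⁻¹‖)² · ‖M − M'‖, where all matrix norms are spectral norms. -/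
/-!
STATEMENT 6: Projected Weyl envelope.

Matrices are indexed by `Fin p ⊕ Fin d` and spectral (ℓ²-operator) norms are provided by the
scoped instances of `Matrix.L2OpNorm`.  `λ_ℓ(·)` denotes the ℓ-th smallest eigenvalue of a
real symmetric matrix, obtained by sorting `Matrix.IsHermitian.eigenvalues` in nondecreasing
order via `Tuple.sort`.
-/

open scoped Matrix.Norms.L2Operator

noncomputable section

/-- The eigenvalues of a real symmetric matrix, sorted in nondecreasing order. -/
def sortedEigenvalues {n : ℕ} {M : Matrix (Fin n) (Fin n) ℝ} (hM : M.IsHermitian) :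
    Fin n → ℝ :=
  hM.eigenvalues ∘ Tuple.sort hM.eigenvalues

/-!
Weyl's inequality `|λ_ℓ(A) - λ_ℓ(B)| ≤ ‖A - B‖` comes from a dimension count: the eigenvectors of
`A` for `λ_ℓ(A), …, λ_n(A)` and those of `B` for `λ_1(B), …, λ_ℓ(B)` span subspaces of dimensions
`n - ℓ + 1` and `ℓ`, so they share a vector `x ≠ 0`, and then
`λ_ℓ(A) ‖x‖² ≤ ⟪x, A x⟫ ≤ ⟪x, B x⟫ + ‖A - B‖ ‖x‖² ≤ (λ_ℓ(B) + ‖A - B‖) ‖x‖²`.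
Applied to `TᵀMT` and `TᵀM'T` it leaves `‖Tᵀ(M - M')T‖ ≤ ‖T‖² ‖M - M'‖`, and
`‖T‖² = ‖TᵀT‖ = ‖1 + CᵀC‖ ≤ 1 + ‖C‖²`, where `‖C‖ ≤ ‖M_yy⁻¹‖ ‖M_yx‖` and `‖M_yx‖ = ‖M_xy‖`
because `M` is symmetric.
-/

open Module Submodule
open scoped InnerProductSpace

theorem Submodule.exists_mem_inf_ne_zero_of_finrank_lt {K V : Type*} [DivisionRing K]
    [AddCommGroup V] [Module K V] [FiniteDimensional K V] {U W : Submodule K V}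
    (h : finrank K V < finrank K U + finrank K W) : ∃ x ∈ U, x ∈ W ∧ x ≠ 0 := by
  by_contra! hUW
  exact h.not_ge (finrank_add_finrank_le_of_disjoint (disjoint_def.mpr hUW))

namespace OrthonormalBasis

section RCLike

variable {ι 𝕜 E : Type*} [Fintype ι] [RCLike 𝕜] [NormedAddCommGroup E] [InnerProductSpace 𝕜 E]

theorem finrank_span_image (b : OrthonormalBasis ι 𝕜 E) (S : Finset ι) :
    finrank 𝕜 (span 𝕜 (b '' S)) = S.card := by
  classical
  have hli : LinearIndepOn 𝕜 id (S.image b : Set E) := by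
    rw [Finset.coe_image]
    exact (b.orthonormal.linearIndependent.linearIndepOn _).id_image
  rw [← Finset.coe_image, finrank_span_finset_eq_card hli,
    Finset.card_image_of_injective _ b.orthonormal.linearIndependent.injective]

theorem inner_eq_zero_of_mem_span_image (b : OrthonormalBasis ι 𝕜 E) {S : Set ι} {x : E}
    (hx : x ∈ span 𝕜 (b '' S)) {i : ι} (hi : i ∉ S) : ⟪b i, x⟫_𝕜 = 0 := by
  have hS : span 𝕜 (b '' S) ≤ (𝕜 ∙ b i)ᗮ := by
    rw [span_le]
    rintro _ ⟨j, hj, rfl⟩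
    exact mem_orthogonal_singleton_iff_inner_right.mpr
      (b.orthonormal.2 (ne_of_mem_of_not_mem hj hi).symm)
  exact mem_orthogonal_singleton_iff_inner_right.mp (hS hx)

end RCLike

section Real

variable {ι E : Type*} [Fintype ι] [NormedAddCommGroup E] [InnerProductSpace ℝ E]

theorem inner_apply_self_eq_sum (b : OrthonormalBasis ι ℝ E) {T : E →ₗ[ℝ] E}
    {μ : ι → ℝ} (hT : ∀ i, T (b i) = μ i • b i) (x : E) :
    ⟪x, T x⟫_ℝ = ∑ i, μ i * ⟪b i, x⟫_ℝ ^ 2 := by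
  have hTx : T x = ∑ i, (μ i * ⟪b i, x⟫_ℝ) • b i := by
    conv_lhs => rw [← b.sum_repr x]
    simp only [map_sum, map_smul, hT, smul_smul, b.repr_apply_apply, mul_comm]
  simp only [hTx, inner_sum, inner_smul_right, real_inner_comm x, sq, mul_assoc]

theorem mul_norm_sq_le_inner_apply_self (b : OrthonormalBasis ι ℝ E)
    {T : E →ₗ[ℝ] E} {μ : ι → ℝ} (hT : ∀ i, T (b i) = μ i • b i) {S : Set ι} {c : ℝ}
    (hc : ∀ i ∈ S, c ≤ μ i) {x : E} (hx : x ∈ span ℝ (b '' S)) :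
    c * ‖x‖ ^ 2 ≤ ⟪x, T x⟫_ℝ := by
  rw [b.inner_apply_self_eq_sum hT, ← b.sum_sq_inner_right, Finset.mul_sum]
  refine Finset.sum_le_sum fun i _ => ?_
  by_cases hi : i ∈ S
  · exact mul_le_mul_of_nonneg_right (hc i hi) (sq_nonneg _)
  · simp [b.inner_eq_zero_of_mem_span_image hx hi]

theorem inner_apply_self_le_mul_norm_sq (b : OrthonormalBasis ι ℝ E)
    {T : E →ₗ[ℝ] E} {μ : ι → ℝ} (hT : ∀ i, T (b i) = μ i • b i) {S : Set ι} {c : ℝ}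
    (hc : ∀ i ∈ S, μ i ≤ c) {x : E} (hx : x ∈ span ℝ (b '' S)) :
    ⟪x, T x⟫_ℝ ≤ c * ‖x‖ ^ 2 := by
  have hneg := b.mul_norm_sq_le_inner_apply_self (T := -T) (μ := -μ) (by simp [hT])
    (c := -c) (fun i hi => neg_le_neg (hc i hi)) hx
  rw [LinearMap.neg_apply, inner_neg_right] at hneg
  linarith

end Real

end OrthonormalBasis

namespace Matrix.IsHermitian

variable {n : ℕ} {A : Matrix (Fin n) (Fin n) ℝ}

def sortedEigenvectorBasis (hA : A.IsHermitian) :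
    OrthonormalBasis (Fin n) ℝ (EuclideanSpace ℝ (Fin n)) :=
  hA.eigenvectorBasis.reindex (Tuple.sort hA.eigenvalues).symm

theorem toEuclideanLin_sortedEigenvectorBasis (hA : A.IsHermitian) (i : Fin n) :
    toEuclideanLin A (hA.sortedEigenvectorBasis i)
      = sortedEigenvalues hA i • hA.sortedEigenvectorBasis i := by
  simp [sortedEigenvectorBasis, sortedEigenvalues, toLpLin_apply, hA.mulVec_eigenvectorBasis]

theorem monotone_sortedEigenvalues (hA : A.IsHermitian) : Monotone (sortedEigenvalues hA) :=
  Tuple.monotone_sort _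

end Matrix.IsHermitian

theorem Matrix.inner_toEuclideanLin_le_add_norm_sub {m : Type*} [Fintype m] [DecidableEq m]
    (A B : Matrix m m ℝ) (x : EuclideanSpace ℝ m) :
    ⟪x, toEuclideanLin A x⟫_ℝ ≤ ⟪x, toEuclideanLin B x⟫_ℝ + ‖A - B‖ * ‖x‖ ^ 2 := by
  have hAB : ⟪x, toEuclideanLin (A - B) x⟫_ℝ ≤ ‖A - B‖ * ‖x‖ ^ 2 :=
    calc ⟪x, toEuclideanLin (A - B) x⟫_ℝ ≤ ‖x‖ * ‖toEuclideanLin (A - B) x‖ :=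
          real_inner_le_norm _ _
      _ ≤ ‖x‖ * (‖A - B‖ * ‖x‖) := by gcongr; exact (A - B).l2_opNorm_mulVec x
      _ = ‖A - B‖ * ‖x‖ ^ 2 := by ring
  rw [map_sub, LinearMap.sub_apply, inner_sub_right] at hAB
  linarith

theorem sortedEigenvalues_le_add_norm_sub {n : ℕ} {A B : Matrix (Fin n) (Fin n) ℝ}
    (hA : A.IsHermitian) (hB : B.IsHermitian) (ℓ : Fin n) :
    sortedEigenvalues hA ℓ ≤ sortedEigenvalues hB ℓ + ‖A - B‖ := by
  obtain ⟨x, hxU, hxW, hx⟩ := exists_mem_inf_ne_zero_of_finrank_lt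
    (U := span ℝ (hA.sortedEigenvectorBasis '' (Finset.Ici ℓ : Set (Fin n))))
    (W := span ℝ (hB.sortedEigenvectorBasis '' (Finset.Iic ℓ : Set (Fin n)))) (by
      rw [OrthonormalBasis.finrank_span_image, OrthonormalBasis.finrank_span_image, Fin.card_Ici,
        Fin.card_Iic, finrank_euclideanSpace_fin]
      omega)
  have hAx := hA.sortedEigenvectorBasis.mul_norm_sq_le_inner_apply_self
    hA.toEuclideanLin_sortedEigenvectorBasis
    (fun i hi => hA.monotone_sortedEigenvalues (Finset.mem_Ici.mp hi)) hxU
  have hBx := hB.sortedEigenvectorBasis.inner_apply_self_le_mul_norm_sq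
    hB.toEuclideanLin_sortedEigenvectorBasis
    (fun i hi => hB.monotone_sortedEigenvalues (Finset.mem_Iic.mp hi)) hxW
  refine le_of_mul_le_mul_right ?_ (by positivity : 0 < ‖x‖ ^ 2)
  rw [add_mul]
  linarith [Matrix.inner_toEuclideanLin_le_add_norm_sub A B x]

theorem abs_sortedEigenvalues_sub_le {n : ℕ} {A B : Matrix (Fin n) (Fin n) ℝ}
    (hA : A.IsHermitian) (hB : B.IsHermitian) (ℓ : Fin n) :
    |sortedEigenvalues hA ℓ - sortedEigenvalues hB ℓ| ≤ ‖A - B‖ := by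
  have hAB := sortedEigenvalues_le_add_norm_sub hA hB ℓ
  have hBA := sortedEigenvalues_le_add_norm_sub hB hA ℓ
  rw [norm_sub_rev] at hBA
  exact abs_sub_le_iff.mpr ⟨by linarith, by linarith⟩

namespace Matrix

variable {𝕜 : Type*} [RCLike 𝕜] {m m₁ m₂ n : Type*} [Fintype m] [Fintype m₁] [Fintype m₂]
  [Fintype n] [DecidableEq n]

theorem l2_opNorm_one_le : ‖(1 : Matrix n n 𝕜)‖ ≤ 1 := by
  rw [← diagonal_one, l2_opNorm_diagonal]
  exact pi_norm_le_iff_of_nonneg zero_le_one |>.mpr fun _ => norm_one.le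

theorem l2_opNorm_fromRows_sq_le (A : Matrix m₁ n 𝕜) (B : Matrix m₂ n 𝕜) :
    ‖fromRows A B‖ ^ 2 ≤ ‖A‖ ^ 2 + ‖B‖ ^ 2 := by
  simp only [sq, ← l2_opNorm_conjTranspose_mul_self,
    conjTranspose_fromRows_eq_fromCols_conjTranspose, fromCols_mul_fromRows]
  exact norm_add_le _ _

theorem l2_opNorm_fromRows_one_le (C : Matrix m n 𝕜) :
    ‖fromRows (1 : Matrix n n 𝕜) C‖ ≤ 1 + ‖C‖ := by
  refine le_of_pow_le_pow_left₀ two_ne_zero (by positivity) ?_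
  calc ‖fromRows 1 C‖ ^ 2 ≤ ‖(1 : Matrix n n 𝕜)‖ ^ 2 + ‖C‖ ^ 2 := l2_opNorm_fromRows_sq_le _ _
    _ ≤ 1 + ‖C‖ ^ 2 := by gcongr; exact pow_le_one₀ (norm_nonneg _) l2_opNorm_one_le
    _ ≤ (1 + ‖C‖) ^ 2 := by nlinarith [norm_nonneg C]

theorem l2_opNorm_conjTranspose_mul_mul_le [DecidableEq m] (T : Matrix m n 𝕜)
    (D : Matrix m m 𝕜) :
    ‖Tᴴ * D * T‖ ≤ ‖T‖ ^ 2 * ‖D‖ :=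
  calc ‖Tᴴ * D * T‖ ≤ ‖Tᴴ‖ * ‖D‖ * ‖T‖ :=
        (l2_opNorm_mul _ _).trans (by gcongr; exact l2_opNorm_mul _ _)
    _ = ‖T‖ ^ 2 * ‖D‖ := by rw [l2_opNorm_conjTranspose]; ring

end Matrix

theorem projected_weyl_envelope_general
    {p d : ℕ}
    (M M' : Matrix (Fin p ⊕ Fin d) (Fin p ⊕ Fin d) ℝ)
    (Mxx : Matrix (Fin p) (Fin p) ℝ) (Mxy : Matrix (Fin p) (Fin d) ℝ)
    (Myx : Matrix (Fin d) (Fin p) ℝ) (Myy : Matrix (Fin d) (Fin d) ℝ)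
    (hM : M = Matrix.fromBlocks Mxx Mxy Myx Myy)
    (hMsymm : M.IsHermitian)
    -- T = [I_p; −C] with C = M_yy⁻¹ M_yx
    (T : Matrix (Fin p ⊕ Fin d) (Fin p) ℝ)
    (hT : T = Matrix.fromRows (1 : Matrix (Fin p) (Fin p) ℝ) (-(Myy⁻¹ * Myx)))
    -- the restricted matrices TᵀMT and TᵀM'T are symmetric
    (hS : (T.transpose * M * T).IsHermitian)
    (hS' : (T.transpose * M' * T).IsHermitian) :
    ∀ ℓ : Fin p,
      |sortedEigenvalues hS ℓ - sortedEigenvalues hS' ℓ|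
        ≤ (1 + ‖Mxy‖ * ‖Myy⁻¹‖) ^ 2 * ‖M - M'‖ := by
  intro ℓ
  obtain ⟨-, hMyx, -, -⟩ := Matrix.isHermitian_fromBlocks_iff.mp (hM ▸ hMsymm)
  have hT_norm : ‖T‖ ≤ 1 + ‖Mxy‖ * ‖Myy⁻¹‖ :=
    calc ‖T‖ ≤ 1 + ‖Myy⁻¹ * Myx‖ := by
          simpa only [hT, norm_neg] using Matrix.l2_opNorm_fromRows_one_le (-(Myy⁻¹ * Myx))
      _ ≤ 1 + ‖Myy⁻¹‖ * ‖Myx‖ := by gcongr; exact Matrix.l2_opNorm_mul _ _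
      _ = 1 + ‖Mxy‖ * ‖Myy⁻¹‖ := by rw [← hMyx, Matrix.l2_opNorm_conjTranspose, mul_comm]
  calc |sortedEigenvalues hS ℓ - sortedEigenvalues hS' ℓ|
      ≤ ‖T.transpose * M * T - T.transpose * M' * T‖ := abs_sortedEigenvalues_sub_le hS hS' ℓ
    _ = ‖T.conjTranspose * (M - M') * T‖ := by
        rw [Matrix.mul_sub, Matrix.sub_mul, Matrix.conjTranspose_eq_transpose_of_trivial]
    _ ≤ ‖T‖ ^ 2 * ‖M - M'‖ := Matrix.l2_opNorm_conjTranspose_mul_mul_le _ _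
    _ ≤ (1 + ‖Mxy‖ * ‖Myy⁻¹‖) ^ 2 * ‖M - M'‖ := by gcongr

/-- **Projected Weyl envelope.**  With `C = M_yy⁻¹ M_yx`, `T = [I_p; −C]`, and sorted
eigenvalues, `|λ_ℓ(TᵀMT) − λ_ℓ(TᵀM'T)| ≤ (1 + ‖M_xy‖·‖M_yy⁻¹‖)²·‖M − M'‖` for every
`ℓ ∈ {1, …, p}`. -/
theorem projected_weyl_envelope
    {p d : ℕ}
    (M M' : Matrix (Fin p ⊕ Fin d) (Fin p ⊕ Fin d) ℝ)
    (Mxx : Matrix (Fin p) (Fin p) ℝ) (Mxy : Matrix (Fin p) (Fin d) ℝ)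
    (Myx : Matrix (Fin d) (Fin p) ℝ) (Myy : Matrix (Fin d) (Fin d) ℝ)
    (Mxx' : Matrix (Fin p) (Fin p) ℝ) (Mxy' : Matrix (Fin p) (Fin d) ℝ)
    (Myx' : Matrix (Fin d) (Fin p) ℝ) (Myy' : Matrix (Fin d) (Fin d) ℝ)
    (hM : M = Matrix.fromBlocks Mxx Mxy Myx Myy)
    (hM' : M' = Matrix.fromBlocks Mxx' Mxy' Myx' Myy')
    (hMsymm : M.IsHermitian) (hM'symm : M'.IsHermitian)
    (hMyy : IsUnit Myy)
    -- T = [I_p; −C] with C = M_yy⁻¹ M_yx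
    (T : Matrix (Fin p ⊕ Fin d) (Fin p) ℝ)
    (hT : T = Matrix.fromRows (1 : Matrix (Fin p) (Fin p) ℝ) (-(Myy⁻¹ * Myx)))
    -- the restricted matrices TᵀMT and TᵀM'T are symmetric
    (hS : (T.transpose * M * T).IsHermitian)
    (hS' : (T.transpose * M' * T).IsHermitian) :
    ∀ ℓ : Fin p,
      |sortedEigenvalues hS ℓ - sortedEigenvalues hS' ℓ|
        ≤ (1 + ‖Mxy‖ * ‖Myy⁻¹‖) ^ 2 * ‖M - M'‖ :=
  projected_weyl_envelope_general M M' Mxx Mxy Myx Myy hM hMsymm T hT hS hS'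
end
end

section
/- Let c₁ ≥ 0, c₂ > 0, c_vp > 0, λ > 0, and k ≥ 1 be real numbers. Define r_LS = (√(c₁² + 4c₂λ) − c₁)/(2c₂) and r_vp = (√(c₁² + 4c₂kλ) − c₁)/(2c₂·c_vp). Then √k · r_LS / c_vp ≤ r_vp ≤ k · r_LS / c_vp. -/
/-!
Both radii are values of `quadRoot c₁ c₂ x`, the nonnegative root `r` of `c₂ r² + c₁ r = x`, and
`r ↦ c₂ r² + c₁ r` is increasing on `[0, ∞)`. If `r` is the root for `x`, then scaling `r` by `√k`
multiplies the quadratic part by `k` and the linear part only by `√k ≤ k`, so it lands at most at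
`k x`; scaling by `k` multiplies the quadratic part by `k² ≥ k`, so it lands at least at `k x`.
Monotonicity turns this into `√k r ≤ quadRoot c₁ c₂ (k x) ≤ k r`.
-/

noncomputable def quadRoot (c₁ c₂ x : ℝ) : ℝ :=
  (Real.sqrt (c₁ ^ 2 + 4 * c₂ * x) - c₁) / (2 * c₂)

section QuadRoot

variable {c₁ c₂ x : ℝ}

theorem quadRoot_nonneg (hc₂ : 0 ≤ c₂) (hx : 0 ≤ x) : 0 ≤ quadRoot c₁ c₂ x := by
  have hsqrt : c₁ ≤ Real.sqrt (c₁ ^ 2 + 4 * c₂ * x) :=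
    Real.le_sqrt_of_sq_le (by nlinarith)
  exact div_nonneg (sub_nonneg.2 hsqrt) (by positivity)

theorem quadRoot_spec (hc₂ : c₂ ≠ 0) (hdisc : 0 ≤ c₁ ^ 2 + 4 * c₂ * x) :
    c₂ * quadRoot c₁ c₂ x ^ 2 + c₁ * quadRoot c₁ c₂ x = x := by
  have hsq := Real.sq_sqrt hdisc
  unfold quadRoot
  set s := Real.sqrt (c₁ ^ 2 + 4 * c₂ * x)
  field_simp
  linear_combination hsq

theorem strictMonoOn_quadratic (hc₁ : 0 ≤ c₁) (hc₂ : 0 < c₂) :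
    StrictMonoOn (fun t : ℝ => c₂ * t ^ 2 + c₁ * t) (Set.Ici 0) := by
  intro a ha b _ hab
  simp only [Set.mem_Ici] at ha
  nlinarith [mul_pos hc₂ (sub_pos.2 hab), mul_nonneg hc₁ (sub_nonneg.2 hab.le)]

variable (hc₁ : 0 ≤ c₁) (hc₂ : 0 < c₂) (hx : 0 ≤ x)
include hc₁ hc₂ hx

theorem le_quadRoot_iff {t : ℝ} (ht : 0 ≤ t) :
    t ≤ quadRoot c₁ c₂ x ↔ c₂ * t ^ 2 + c₁ * t ≤ x := by
  have hroot : c₂ * quadRoot c₁ c₂ x ^ 2 + c₁ * quadRoot c₁ c₂ x = x :=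
    quadRoot_spec hc₂.ne' (by positivity)
  rw [← (strictMonoOn_quadratic hc₁ hc₂).le_iff_le ht (quadRoot_nonneg hc₂.le hx), hroot]

theorem quadRoot_le_iff {t : ℝ} (ht : 0 ≤ t) :
    quadRoot c₁ c₂ x ≤ t ↔ x ≤ c₂ * t ^ 2 + c₁ * t := by
  have hroot : c₂ * quadRoot c₁ c₂ x ^ 2 + c₁ * quadRoot c₁ c₂ x = x :=
    quadRoot_spec hc₂.ne' (by positivity)
  rw [← (strictMonoOn_quadratic hc₁ hc₂).le_iff_le (quadRoot_nonneg hc₂.le hx) ht, hroot]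

variable {k : ℝ} (hk : 1 ≤ k)
include hk

theorem sqrt_mul_quadRoot_le_quadRoot_mul :
    Real.sqrt k * quadRoot c₁ c₂ x ≤ quadRoot c₁ c₂ (k * x) := by
  set r := quadRoot c₁ c₂ x
  have hr : 0 ≤ r := quadRoot_nonneg hc₂.le hx
  have hroot : c₂ * r ^ 2 + c₁ * r = x := quadRoot_spec hc₂.ne' (by positivity)
  have hsqrt_sq : Real.sqrt k ^ 2 = k := Real.sq_sqrt (by linarith)
  have hsqrt_le : Real.sqrt k ≤ k := by
    nlinarith [Real.one_le_sqrt.2 hk]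
  rw [le_quadRoot_iff hc₁ hc₂ (by nlinarith) (by positivity)]
  calc c₂ * (Real.sqrt k * r) ^ 2 + c₁ * (Real.sqrt k * r)
      = k * (c₂ * r ^ 2) + Real.sqrt k * (c₁ * r) := by rw [mul_pow, hsqrt_sq]; ring
    _ ≤ k * (c₂ * r ^ 2) + k * (c₁ * r) := by gcongr
    _ = k * x := by rw [← hroot]; ring

theorem quadRoot_mul_le_mul_quadRoot :
    quadRoot c₁ c₂ (k * x) ≤ k * quadRoot c₁ c₂ x := by
  set r := quadRoot c₁ c₂ x
  have hr : 0 ≤ r := quadRoot_nonneg hc₂.le hx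
  have hroot : c₂ * r ^ 2 + c₁ * r = x := quadRoot_spec hc₂.ne' (by positivity)
  rw [quadRoot_le_iff hc₁ hc₂ (by nlinarith) (by positivity)]
  calc k * x = k * (c₂ * r ^ 2) + k * (c₁ * r) := by rw [← hroot]; ring
    _ ≤ k ^ 2 * (c₂ * r ^ 2) + k * (c₁ * r) := by gcongr; nlinarith
    _ = c₂ * (k * r) ^ 2 + c₁ * (k * r) := by ring

end QuadRoot

theorem radii_comparison
    (c₁ c₂ cvp lam k : ℝ)
    (hc₁ : 0 ≤ c₁) (hc₂ : 0 < c₂) (hcvp : 0 < cvp) (hlam : 0 < lam) (hk : 1 ≤ k)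
    (rLS rvp : ℝ)
    (hrLS : rLS = (Real.sqrt (c₁ ^ 2 + 4 * c₂ * lam) - c₁) / (2 * c₂))
    (hrvp : rvp = (Real.sqrt (c₁ ^ 2 + 4 * c₂ * k * lam) - c₁) / (2 * c₂ * cvp)) :
    Real.sqrt k * rLS / cvp ≤ rvp ∧ rvp ≤ k * rLS / cvp := by
  have hLS : rLS = quadRoot c₁ c₂ lam := hrLS
  have hvp : rvp = quadRoot c₁ c₂ (k * lam) / cvp := by
    rw [hrvp, quadRoot, div_div, mul_assoc (4 * c₂)]
  rw [hLS, hvp]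
  exact ⟨div_le_div_of_nonneg_right
      (sqrt_mul_quadRoot_le_quadRoot_mul hc₁ hc₂ hlam.le hk) hcvp.le,
    div_le_div_of_nonneg_right (quadRoot_mul_le_mul_quadRoot hc₁ hc₂ hlam.le hk) hcvp.le⟩
end

section
/- Under the separable least-squares model assumptions with A(x) of full column rank for every x ∈ Ω and σ̃ := min_{x∈Ω} σ_min(A(x)) > 0, define ŷ(x) = A(x)⁺ z, where A(x)⁺ = (A(x)ᵀA(x))⁻¹A(x)ᵀ is the Moore–Penrose pseudo-inverse. Then for every x ∈ Ω: (i) ‖ŷ(x) − y*‖ ≤ (σ₁/σ̃)·‖x − x*‖·‖y*‖ + (1/σ̃)·‖w‖, and (ii) ‖ŷ(x) − ŷ(x*)‖ ≤ (σ₁/σ̃)·‖x − x*‖·‖y*‖ + (2/σ̃)·‖w‖. -/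
/-!
STATEMENT 9: Perturbation bounds for the variable-projection optimal linear coefficients
`ŷ(x) = A(x)⁺ z`.

The dictionary is a map into continuous linear maps between Euclidean spaces (operator norm
= spectral norm); `A(x)⁺ = (A(x)ᵀA(x))⁻¹A(x)ᵀ` is realised via the adjoint and
`ContinuousLinearMap.inverse` of the Gram map.  `σ̃ ≤ σ_min(A(x))` is expressed by the
equivalent lower bound `σ̃‖v‖ ≤ ‖A(x)v‖` for all `v`.
-/

noncomputable section

/-- The Moore–Penrose pseudo-inverse `A(x)⁺ = (A(x)ᵀA(x))⁻¹A(x)ᵀ` of a full-column-rank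
dictionary. -/
def pinv {p d N : ℕ} (A : EucSp p → (EucSp d →L[ℝ] EucSp N)) (x : EucSp p) :
    EucSp N →L[ℝ] EucSp d :=
  (ContinuousLinearMap.adjoint (A x) ∘L A x).inverse ∘L ContinuousLinearMap.adjoint (A x)

/-!
Since `A(x)⁺` is a left inverse of `A(x)`, writing `z = A(x)y* + ((A(x*) − A(x))y* + w)` gives
`ŷ(x) − y* = A(x)⁺((A(x*) − A(x))y* + w)`. The map `A(x)A(x)⁺` is the orthogonal projection onto
the range of `A(x)`, so `σ̃‖A(x)⁺u‖ ≤ ‖A(x)A(x)⁺u‖ ≤ ‖u‖`, and the mean value theorem on the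
convex set `Ω` bounds `‖A(x*) − A(x)‖` by `σ₁‖x − x*‖`. This is (i); (ii) is the triangle
inequality through `y*`, using (i) at `x` and at `x*`.
-/

open ContinuousLinearMap

theorem injective_of_mul_norm_le_norm {E F : Type*} [NormedAddCommGroup E] [NormedSpace ℝ E]
    [NormedAddCommGroup F] [NormedSpace ℝ F] {B : E →L[ℝ] F} {σ : ℝ} (hσ : 0 < σ)
    (hB : ∀ v, σ * ‖v‖ ≤ ‖B v‖) : Function.Injective B :=
  (injective_iff_map_eq_zero B).2 fun v hv =>
    norm_le_zero_iff.1 <| nonpos_of_mul_nonpos_right (by simpa [hv] using hB v) hσ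

section GramPinv

variable {E F : Type*} [NormedAddCommGroup E] [InnerProductSpace ℝ E] [FiniteDimensional ℝ E]
  [NormedAddCommGroup F] [InnerProductSpace ℝ F] [CompleteSpace F]

-- `pinv A x` unfolds to `gramPinv (A x)`, so the lemmas below apply to it directly.
def gramPinv (B : E →L[ℝ] F) : F →L[ℝ] E :=
  (adjoint B ∘L B).inverse ∘L adjoint B

theorem isInvertible_adjoint_comp_self {B : E →L[ℝ] F} (hB : Function.Injective B) :
    (adjoint B ∘L B).IsInvertible := by
  have hG : Function.Injective (adjoint B ∘L B) := by
    rw [coe_comp]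
    exact (adjoint_comp_self_injective_iff B).2 hB
  exact ⟨(LinearEquiv.ofInjectiveEndo _ hG).toContinuousLinearEquiv, rfl⟩

theorem gramPinv_apply_self {B : E →L[ℝ] F} (hB : Function.Injective B) (y : E) :
    gramPinv B (B y) = y :=
  (isInvertible_adjoint_comp_self hB).inverse_apply_self y

theorem norm_apply_gramPinv_le {B : E →L[ℝ] F} (hB : Function.Injective B) (u : F) :
    ‖B (gramPinv B u)‖ ≤ ‖u‖ := by
  set y := gramPinv B u
  have normal_eq : adjoint B (B y) = adjoint B u :=
    (isInvertible_adjoint_comp_self hB).self_apply_inverse (adjoint B u)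
  have hsq : ‖B y‖ ^ 2 = inner ℝ u (B y) := by
    rw [← real_inner_self_eq_norm_sq, ← adjoint_inner_left, normal_eq, adjoint_inner_left]
  have hle : ‖B y‖ * ‖B y‖ ≤ ‖u‖ * ‖B y‖ := by
    rw [← sq, hsq]
    exact real_inner_le_norm u (B y)
  rcases (norm_nonneg (B y)).eq_or_lt with hzero | hpos
  · rw [← hzero]
    exact norm_nonneg u
  · exact le_of_mul_le_mul_right hle hpos

theorem norm_gramPinv_apply_le {B : E →L[ℝ] F} {σ : ℝ} (hσ : 0 < σ)
    (hB : ∀ v, σ * ‖v‖ ≤ ‖B v‖) (u : F) : ‖gramPinv B u‖ ≤ ‖u‖ / σ := by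
  rw [le_div_iff₀ hσ, mul_comm]
  exact (hB _).trans (norm_apply_gramPinv_le (injective_of_mul_norm_le_norm hσ hB) u)

theorem norm_gramPinv_apply_add_sub_le {B : E →L[ℝ] F} {σ : ℝ} (hσ : 0 < σ)
    (hB : ∀ v, σ * ‖v‖ ≤ ‖B v‖) (B' : E →L[ℝ] F) (y : E) (w : F) :
    ‖gramPinv B (B' y + w) - y‖ ≤ (‖B' - B‖ * ‖y‖ + ‖w‖) / σ := by
  have hsplit : gramPinv B (B' y + w) - y = gramPinv B ((B' - B) y + w) := by
    have hz : B' y + w = B y + ((B' - B) y + w) := by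
      rw [sub_apply]
      abel
    rw [hz, map_add, gramPinv_apply_self (injective_of_mul_norm_le_norm hσ hB), add_sub_cancel_left]
  rw [hsplit]
  calc ‖gramPinv B ((B' - B) y + w)‖
      ≤ ‖(B' - B) y + w‖ / σ := norm_gramPinv_apply_le hσ hB _
    _ ≤ (‖B' - B‖ * ‖y‖ + ‖w‖) / σ := by
      gcongr
      exact (norm_add_le _ _).trans (add_le_add_left ((B' - B).le_opNorm y) _)

end GramPinv

theorem pinv_coefficient_stability_general
    {p d N : ℕ}
    (Ω : Set (EucSp p)) (hΩconv : Convex ℝ Ω)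
    (A : EucSp p → (EucSp d →L[ℝ] EucSp N)) (hA : ContDiff ℝ 3 A)
    (σ1 : ℝ) (hσ1 : ∀ x ∈ Ω, ‖iteratedFDeriv ℝ 1 A x‖ ≤ σ1)
    (σmin : ℝ) (hσmin : 0 < σmin)
    (hσminA : ∀ x ∈ Ω, ∀ v : EucSp d, σmin * ‖v‖ ≤ ‖A x v‖)
    (xs : EucSp p) (hxs : xs ∈ Ω) (ys : EucSp d) (w : EucSp N) :
    ∀ x ∈ Ω,
      ‖pinv A x (A xs ys + w) - ys‖
          ≤ σ1 / σmin * ‖x - xs‖ * ‖ys‖ + (1 / σmin) * ‖w‖ ∧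
      ‖pinv A x (A xs ys + w) - pinv A xs (A xs ys + w)‖
          ≤ σ1 / σmin * ‖x - xs‖ * ‖ys‖ + (2 / σmin) * ‖w‖ := by
  have lipschitz : ∀ x ∈ Ω, ‖A xs - A x‖ ≤ σ1 * ‖x - xs‖ := fun x hx => by
    rw [norm_sub_rev]
    exact hΩconv.norm_image_sub_le_of_norm_fderiv_le
      (fun y _ => (hA.differentiable (by norm_num)).differentiableAt)
      (fun y hy => by simpa using hσ1 y hy) hxs hx
  have part_i : ∀ x ∈ Ω, ‖pinv A x (A xs ys + w) - ys‖
      ≤ σ1 / σmin * ‖x - xs‖ * ‖ys‖ + (1 / σmin) * ‖w‖ := fun x hx =>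
    calc ‖pinv A x (A xs ys + w) - ys‖
        ≤ (‖A xs - A x‖ * ‖ys‖ + ‖w‖) / σmin :=
          norm_gramPinv_apply_add_sub_le hσmin (hσminA x hx) (A xs) ys w
      _ ≤ (σ1 * ‖x - xs‖ * ‖ys‖ + ‖w‖) / σmin := by gcongr; exact lipschitz x hx
      _ = σ1 / σmin * ‖x - xs‖ * ‖ys‖ + (1 / σmin) * ‖w‖ := by ring
  intro x hx
  refine ⟨part_i x hx, ?_⟩
  have at_xs := part_i xs hxs
  rw [sub_self, norm_zero, mul_zero, zero_mul, zero_add] at at_xs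
  calc ‖pinv A x (A xs ys + w) - pinv A xs (A xs ys + w)‖
      ≤ ‖pinv A x (A xs ys + w) - ys‖ + ‖pinv A xs (A xs ys + w) - ys‖ := by
        simpa only [dist_eq_norm] using dist_triangle_right _ _ ys
    _ ≤ σ1 / σmin * ‖x - xs‖ * ‖ys‖ + (2 / σmin) * ‖w‖ := by
        linarith [part_i x hx, show 2 / σmin * ‖w‖ = 1 / σmin * ‖w‖ + 1 / σmin * ‖w‖ by ring]

/-- **Stability of the optimal linear coefficients.**
(i) `‖ŷ(x) − y*‖ ≤ (σ₁/σ̃)‖x − x*‖‖y*‖ + (1/σ̃)‖w‖`, and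
(ii) `‖ŷ(x) − ŷ(x*)‖ ≤ (σ₁/σ̃)‖x − x*‖‖y*‖ + (2/σ̃)‖w‖`. -/
theorem pinv_coefficient_stability
    {p d N : ℕ}
    (Ω : Set (EucSp p)) (hΩconv : Convex ℝ Ω) (hΩcomp : IsCompact Ω)
    (A : EucSp p → (EucSp d →L[ℝ] EucSp N)) (hA : ContDiff ℝ 3 A)
    (σ1 : ℝ) (hσ1 : ∀ x ∈ Ω, ‖iteratedFDeriv ℝ 1 A x‖ ≤ σ1)
    -- full column rank and uniform lower singular-value bound σ̃ > 0
    (hrank : ∀ x ∈ Ω, Function.Injective (A x))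
    (σmin : ℝ) (hσmin : 0 < σmin)
    (hσminA : ∀ x ∈ Ω, ∀ v : EucSp d, σmin * ‖v‖ ≤ ‖A x v‖)
    (xs : EucSp p) (hxs : xs ∈ Ω) (ys : EucSp d) (w : EucSp N) :
    ∀ x ∈ Ω,
      ‖pinv A x (A xs ys + w) - ys‖
          ≤ σ1 / σmin * ‖x - xs‖ * ‖ys‖ + (1 / σmin) * ‖w‖ ∧
      ‖pinv A x (A xs ys + w) - pinv A xs (A xs ys + w)‖
          ≤ σ1 / σmin * ‖x - xs‖ * ‖ys‖ + (2 / σmin) * ‖w‖ :=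
  pinv_coefficient_stability_general Ω hΩconv A hA σ1 hσ1 σmin hσmin hσminA xs hxs ys w
end
end

section
/- Under the separable least-squares model assumptions with A(x) of full column rank for every x ∈ Ω and σ̃ := min_{x∈Ω} σ_min(A(x)) > 0, define the lifting map θ(x) = (x, ŷ(x)) with ŷ(x) = A(x)⁺ z. Then for every x ∈ Ω, the unmixing metric between lifted points satisfies ρ(θ(x), θ(x*)) ≤ c_vp·‖x − x*‖ + (2σ₁/σ̃)·‖w‖, where c_vp = (σ₂ + σ₁²/σ̃)·‖y*‖ + σ₁. -/
/-!
The lifted estimate reduces to a perturbation bound for the pseudo-inverse. Since `A(x)⁺` is a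
left inverse of `A(x)`, `A(x)⁺ z − A(x*)⁺ z = A(x)⁺ (A(x*) − A(x)) y* + (A(x)⁺ − A(x*)⁺) w`.
A lower bound `σ̃ ‖v‖ ≤ ‖A(x) v‖` gives `‖A(x)⁺‖ ≤ 1/σ̃`, and the mean value theorem on the
convex set `Ω` gives `‖A(x*) − A(x)‖ ≤ σ₁ ‖x − x*‖`; hence
`‖ŷ(x) − ŷ(x*)‖ ≤ (σ₁/σ̃) ‖y*‖ ‖x − x*‖ + (2/σ̃) ‖w‖`, and multiplying by `σ₁` gives the claim.
-/

noncomputable section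

namespace ContinuousLinearMap

open scoped InnerProductSpace InnerProduct

variable {E F : Type*}
  [NormedAddCommGroup E] [InnerProductSpace ℝ E] [FiniteDimensional ℝ E]
  [NormedAddCommGroup F] [InnerProductSpace ℝ F] [CompleteSpace F]

def leftPseudoInverse (T : E →L[ℝ] F) : F →L[ℝ] E :=
  (T† ∘L T).inverse ∘L T†

theorem isInvertible_adjoint_comp_self {T : E →L[ℝ] F} (hT : Function.Injective T) :
    (T† ∘L T).IsInvertible := by
  have hinj : Function.Injective (T† ∘L T) :=
    (adjoint_comp_self_injective_iff T).mpr hT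
  exact ⟨(LinearEquiv.ofInjectiveEndo _ hinj).toContinuousLinearEquiv, rfl⟩

theorem leftPseudoInverse_apply_self {T : E →L[ℝ] F} (hT : Function.Injective T) (v : E) :
    T.leftPseudoInverse (T v) = v :=
  (isInvertible_adjoint_comp_self hT).inverse_apply_self v

theorem norm_leftPseudoInverse_le {T : E →L[ℝ] F} {σ : ℝ} (hσ : 0 < σ)
    (hT : ∀ v, σ * ‖v‖ ≤ ‖T v‖) : ‖T.leftPseudoInverse‖ ≤ σ⁻¹ := by
  have hinj : Function.Injective T := by
    refine (injective_iff_map_eq_zero T).mpr fun v hv ↦ norm_le_zero_iff.mp ?_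
    exact le_of_mul_le_mul_left (by simpa [hv] using hT v) hσ
  refine opNorm_le_bound _ (inv_nonneg.mpr hσ.le) fun u ↦ ?_
  set v := T.leftPseudoInverse u
  have hnormal : (T† ∘L T) v = adjoint T u :=
    (isInvertible_adjoint_comp_self hinj).self_apply_inverse (adjoint T u)
  -- `T v` is the orthogonal projection of `u` onto the range of `T`, so `‖T v‖ ≤ ‖u‖`.
  have hproj : ‖T v‖ ≤ ‖u‖ := by
    have hsq : ‖T v‖ ^ 2 ≤ ‖u‖ * ‖T v‖ := by
      rw [apply_norm_sq_eq_inner_adjoint_left, hnormal, adjoint_inner_left, RCLike.re_to_real]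
      exact real_inner_le_norm u (T v)
    nlinarith [norm_nonneg (T v), norm_nonneg u]
  rw [inv_mul_eq_div, le_div_iff₀ hσ, mul_comm]
  exact (hT v).trans hproj

end ContinuousLinearMap

theorem norm_leftInverse_apply_sub_le {𝕜 E F : Type*} [NontriviallyNormedField 𝕜]
    [NormedAddCommGroup E] [NormedSpace 𝕜 E] [NormedAddCommGroup F] [NormedSpace 𝕜 F]
    {S T : E →L[𝕜] F} {P Q : F →L[𝕜] E} {c : ℝ}
    (hPS : Function.LeftInverse P S) (hQT : Function.LeftInverse Q T)
    (hP : ‖P‖ ≤ c) (hQ : ‖Q‖ ≤ c) (y : E) (w : F) :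
    ‖P (T y + w) - Q (T y + w)‖ ≤ c * (‖T - S‖ * ‖y‖) + 2 * c * ‖w‖ := by
  have hsplit : P (T y + w) - Q (T y + w) = P ((T - S) y) + (P w - Q w) := by
    simp only [map_add, sub_apply, map_sub, hPS y, hQT y]
    abel
  have hPTS : ‖P ((T - S) y)‖ ≤ c * (‖T - S‖ * ‖y‖) :=
    (P.le_of_opNorm_le hP _).trans <|
      mul_le_mul_of_nonneg_left ((T - S).le_opNorm y) ((norm_nonneg _).trans hP)
  calc ‖P (T y + w) - Q (T y + w)‖
      ≤ ‖P ((T - S) y)‖ + (‖P w‖ + ‖Q w‖) :=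
        hsplit ▸ (norm_add_le _ _).trans (add_le_add_right (norm_sub_le _ _) _)
    _ ≤ c * (‖T - S‖ * ‖y‖) + (c * ‖w‖ + c * ‖w‖) := by
        gcongr
        · exact P.le_of_opNorm_le hP w
        · exact Q.le_of_opNorm_le hQ w
    _ = c * (‖T - S‖ * ‖y‖) + 2 * c * ‖w‖ := by ring

theorem lifted_unmixing_metric_bound_general
    {p d N : ℕ}
    (Ω : Set (EucSp p)) (hΩconv : Convex ℝ Ω)
    (A : EucSp p → (EucSp d →L[ℝ] EucSp N)) (hA : ContDiff ℝ 3 A)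
    (σ1 σ2 : ℝ)
    (hσ1 : ∀ x ∈ Ω, ‖iteratedFDeriv ℝ 1 A x‖ ≤ σ1)
    -- full column rank and uniform lower singular-value bound σ̃ > 0
    (hrank : ∀ x ∈ Ω, Function.Injective (A x))
    (σmin : ℝ) (hσmin : 0 < σmin)
    (hσminA : ∀ x ∈ Ω, ∀ v : EucSp d, σmin * ‖v‖ ≤ ‖A x v‖)
    (xs : EucSp p) (hxs : xs ∈ Ω) (ys : EucSp d) (w : EucSp N)
    (cvp : ℝ) (hcvp : cvp = (σ2 + σ1 ^ 2 / σmin) * ‖ys‖ + σ1) :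
    ∀ x ∈ Ω,
      (σ2 * ‖ys‖ + σ1) * ‖x - xs‖
          + σ1 * ‖pinv A x (A xs ys + w) - pinv A xs (A xs ys + w)‖
        ≤ cvp * ‖x - xs‖ + (2 * σ1 / σmin) * ‖w‖ := by
  intro x hx
  have hσ1_nonneg : 0 ≤ σ1 := (norm_nonneg _).trans (hσ1 xs hxs)
  have hlip : ‖A xs - A x‖ ≤ σ1 * ‖x - xs‖ := by
    rw [norm_sub_rev x]
    exact hΩconv.norm_image_sub_le_of_norm_fderiv_le
      (fun y _ ↦ (hA.differentiable (by norm_num)).differentiableAt)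
      (fun y hy ↦ by simpa using hσ1 y hy) hx hxs
  -- `pinv A x` unfolds to `(A x).leftPseudoInverse`.
  have hΔ : ‖pinv A x (A xs ys + w) - pinv A xs (A xs ys + w)‖
      ≤ σmin⁻¹ * (‖A xs - A x‖ * ‖ys‖) + 2 * σmin⁻¹ * ‖w‖ :=
    norm_leftInverse_apply_sub_le
      (ContinuousLinearMap.leftPseudoInverse_apply_self (hrank x hx))
      (ContinuousLinearMap.leftPseudoInverse_apply_self (hrank xs hxs))
      (ContinuousLinearMap.norm_leftPseudoInverse_le hσmin (hσminA x hx))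
      (ContinuousLinearMap.norm_leftPseudoInverse_le hσmin (hσminA xs hxs)) ys w
  calc (σ2 * ‖ys‖ + σ1) * ‖x - xs‖ + σ1 * ‖pinv A x (A xs ys + w) - pinv A xs (A xs ys + w)‖
      ≤ (σ2 * ‖ys‖ + σ1) * ‖x - xs‖
          + σ1 * (σmin⁻¹ * (σ1 * ‖x - xs‖ * ‖ys‖) + 2 * σmin⁻¹ * ‖w‖) := by
        gcongr
        exact hΔ.trans (by gcongr)
    _ = cvp * ‖x - xs‖ + (2 * σ1 / σmin) * ‖w‖ := by
        rw [hcvp]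
        ring

/-- **Lifting-map perturbation bound in the unmixing metric.** -/
theorem lifted_unmixing_metric_bound
    {p d N : ℕ}
    (Ω : Set (EucSp p)) (hΩconv : Convex ℝ Ω) (hΩcomp : IsCompact Ω)
    (A : EucSp p → (EucSp d →L[ℝ] EucSp N)) (hA : ContDiff ℝ 3 A)
    (σ1 σ2 : ℝ)
    (hσ1 : ∀ x ∈ Ω, ‖iteratedFDeriv ℝ 1 A x‖ ≤ σ1)
    (hσ2 : ∀ x ∈ Ω, ‖iteratedFDeriv ℝ 2 A x‖ ≤ σ2)
    -- full column rank and uniform lower singular-value bound σ̃ > 0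
    (hrank : ∀ x ∈ Ω, Function.Injective (A x))
    (σmin : ℝ) (hσmin : 0 < σmin)
    (hσminA : ∀ x ∈ Ω, ∀ v : EucSp d, σmin * ‖v‖ ≤ ‖A x v‖)
    (xs : EucSp p) (hxs : xs ∈ Ω) (ys : EucSp d) (w : EucSp N)
    (cvp : ℝ) (hcvp : cvp = (σ2 + σ1 ^ 2 / σmin) * ‖ys‖ + σ1) :
    ∀ x ∈ Ω,
      (σ2 * ‖ys‖ + σ1) * ‖x - xs‖
          + σ1 * ‖pinv A x (A xs ys + w) - pinv A xs (A xs ys + w)‖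
        ≤ cvp * ‖x - xs‖ + (2 * σ1 / σmin) * ‖w‖ :=
  lifted_unmixing_metric_bound_general Ω hΩconv A hA σ1 σ2 hσ1 hrank σmin hσmin hσminA xs hxs ys w
    cvp hcvp
end
end

section
/- Let Δ > 0, let t₁ < t₂ < … < t_q be real numbers with t_{m+1} − t_m ≥ Δ for all m, and let G ∈ ℝ^{N×q} have columns g₁, …, g_q. Suppose ϱ : [0, ∞) → [0, ∞) is nonincreasing and satisfies |⟨g_n, g_m⟩| ≤ ϱ(|t_n − t_m|) for all n, m ∈ {1, …, q}, and that the series μ := ϱ(0) + 2·Σ_{m=1}^∞ ϱ(mΔ) converges. Then the spectral norm of G satisfies ‖G‖² ≤ μ. -/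
/-!
For a unit vector x, ‖G x‖² = Σₙₘ xₙ xₘ ⟨gₙ, gₘ⟩, and bounding |xₙ xₘ| ≤ (xₙ² + xₘ²)/2 turns this
into Σₙ xₙ² Σₘ |⟨gₙ, gₘ⟩| (Schur's test, i.e. Gershgorin for the Gram matrix). Consecutive gaps
of at least Δ give |tₙ - tₘ| ≥ |n - m| Δ, so since ϱ is nonincreasing each row sum is at most
Σ_{d ∈ ℤ} ϱ(|d| Δ) = μ.
-/

open scoped Matrix.Norms.L2Operator

open Finset Matrix

theorem EuclideanSpace.real_norm_sq_eq_dotProduct {ι : Type*} [Fintype ι]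
    (y : EuclideanSpace ℝ ι) : ‖y‖ ^ 2 = y.ofLp ⬝ᵥ y.ofLp := by
  rw [← real_inner_self_eq_norm_sq, EuclideanSpace.inner_eq_star_dotProduct]; rfl

namespace Matrix

variable {ι : Type*} [Fintype ι]

theorem dotProduct_mulVec_le_of_abs_le {A R : Matrix ι ι ℝ} {μ : ℝ}
    (hAR : ∀ i j, |A i j| ≤ R i j) (hrow : ∀ i, ∑ j, R i j ≤ μ) (hcol : ∀ j, ∑ i, R i j ≤ μ)
    (x : ι → ℝ) : x ⬝ᵥ A *ᵥ x ≤ μ * (x ⬝ᵥ x) := by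
  have hentry (i j : ι) : x i * A i j * x j ≤ (x i ^ 2 + x j ^ 2) / 2 * R i j :=
    calc x i * A i j * x j ≤ |x i| * |x j| * |A i j| := by
          rw [← abs_mul, ← abs_mul, mul_right_comm]; exact le_abs_self _
      _ ≤ (x i ^ 2 + x j ^ 2) / 2 * R i j := by
          refine mul_le_mul ?_ (hAR i j) (abs_nonneg _) (by positivity)
          nlinarith [two_mul_le_add_sq |x i| |x j|, sq_abs (x i), sq_abs (x j)]
  have hswap : ∑ j, x j ^ 2 * ∑ i, R i j = ∑ i, ∑ j, x j ^ 2 * R i j := by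
    rw [sum_comm]; simp only [mul_sum]
  calc x ⬝ᵥ A *ᵥ x = ∑ i, ∑ j, x i * A i j * x j := by
        simp only [dotProduct, mulVec, mul_sum, mul_assoc]
    _ ≤ ∑ i, ∑ j, (x i ^ 2 + x j ^ 2) / 2 * R i j :=
        sum_le_sum fun i _ => sum_le_sum fun j _ => hentry i j
    _ = (∑ i, x i ^ 2 * ∑ j, R i j + ∑ j, x j ^ 2 * ∑ i, R i j) / 2 := by
        rw [hswap]
        simp only [mul_sum, ← sum_add_distrib, sum_div]
        exact sum_congr rfl fun i _ => sum_congr rfl fun j _ => by ring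
    _ ≤ (∑ i, x i ^ 2 * μ + ∑ j, x j ^ 2 * μ) / 2 := by
        gcongr with i _ j _
        exacts [hrow i, hcol j]
    _ = μ * (x ⬝ᵥ x) := by simp only [dotProduct, ← sum_mul, sq]; ring

variable {m n : Type*} [Fintype m] [Fintype n] [DecidableEq n]

theorem l2_opNorm_sq_le_of_dotProduct_le {G : Matrix m n ℝ} {μ : ℝ} (hμ : 0 ≤ μ)
    (h : ∀ x, x ⬝ᵥ (Gᵀ * G) *ᵥ x ≤ μ * (x ⬝ᵥ x)) : ‖G‖ ^ 2 ≤ μ := by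
  suffices ‖G‖ ≤ √μ by simpa [Real.sq_sqrt hμ] using pow_le_pow_left₀ (norm_nonneg _) this 2
  rw [l2_opNorm_def]
  refine ContinuousLinearMap.opNorm_le_bound _ (Real.sqrt_nonneg μ) fun x => ?_
  change ‖WithLp.toLp 2 (G *ᵥ x.ofLp)‖ ≤ √μ * ‖x‖
  rw [← pow_le_pow_iff_left₀ (norm_nonneg _) (by positivity) two_ne_zero, mul_pow,
    Real.sq_sqrt hμ, EuclideanSpace.real_norm_sq_eq_dotProduct,
    EuclideanSpace.real_norm_sq_eq_dotProduct]
  have hx := h x.ofLp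
  rw [← mulVec_mulVec, dotProduct_mulVec x.ofLp, vecMul_transpose] at hx
  exact hx

end Matrix

theorem Fin.monotone_sub_mul_of_gap_le {q : ℕ} {Δ : ℝ} {t : Fin q → ℝ}
    (hsep : ∀ (m : Fin q) (h : (m : ℕ) + 1 < q), Δ ≤ t ⟨(m : ℕ) + 1, h⟩ - t m) :
    Monotone fun m : Fin q => t m - m * Δ := by
  cases q with
  | zero => exact fun m => m.elim0
  | succ q =>
    refine Fin.monotone_iff_le_succ.2 fun i => ?_
    have : Δ ≤ t i.succ - t i.castSucc := hsep i.castSucc (by simp)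
    simp only [Fin.val_castSucc, Fin.val_succ, Nat.cast_add, Nat.cast_one]
    linarith

theorem Fin.abs_sub_mul_le_abs_sub_of_gap_le {q : ℕ} {Δ : ℝ} {t : Fin q → ℝ}
    (hsep : ∀ (m : Fin q) (h : (m : ℕ) + 1 < q), Δ ≤ t ⟨(m : ℕ) + 1, h⟩ - t m) (n m : Fin q) :
    |(n : ℝ) - m| * Δ ≤ |t n - t m| := by
  wlog hmn : m ≤ n generalizing n m
  · rw [abs_sub_comm, abs_sub_comm (t n)]
    exact this m n (le_of_not_ge hmn)
  have hmono : t m - m * Δ ≤ t n - n * Δ := Fin.monotone_sub_mul_of_gap_le hsep hmn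
  rw [abs_of_nonneg (sub_nonneg.2 (Nat.cast_le.2 hmn))]
  linarith [le_abs_self (t n - t m)]

theorem sum_fin_natAbs_sub_le_tsum {q : ℕ} {f : ℕ → ℝ} (hf : ∀ k, 0 ≤ f k)
    (hs : Summable fun k => f (k + 1)) (n : Fin q) :
    ∑ m : Fin q, f ((n : ℤ) - m).natAbs ≤ f 0 + 2 * ∑' k, f (k + 1) := by
  have hs0 : Summable f := (summable_nat_add_iff 1).1 hs
  have hsum : HasSum (fun j : ℤ => f j.natAbs) (f 0 + 2 * ∑' k, f (k + 1)) := by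
    have hnat : HasSum (fun k : ℕ => f (k : ℤ).natAbs) (∑' k, f k) := hs0.hasSum
    have hneg : HasSum (fun k : ℕ => f (-((k : ℤ) + 1)).natAbs) (∑' k, f (k + 1)) := hs.hasSum
    have := HasSum.of_nat_of_neg_add_one (f := fun j : ℤ => f j.natAbs) hnat hneg
    rwa [hs0.tsum_eq_zero_add, add_assoc, ← two_mul] at this
  have hinj : Function.Injective fun m : Fin q => (n : ℤ) - m := fun a b hab => by
    simpa [Fin.ext_iff] using hab
  calc ∑ m : Fin q, f ((n : ℤ) - m).natAbs = ∑' m : Fin q, f ((n : ℤ) - m).natAbs :=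
        (tsum_fintype _).symm
    _ ≤ ∑' j : ℤ, f j.natAbs := tsum_comp_le_tsum_of_inj hsum.summable (fun j => hf _) hinj
    _ = _ := hsum.tsum_eq

theorem coherence_gershgorin_bound_general
    {N q : ℕ} (Δ : ℝ) (hΔ : 0 < Δ)
    (t : Fin q → ℝ)
    (hsep : ∀ (m : Fin q) (h : (m : ℕ) + 1 < q), Δ ≤ t ⟨(m : ℕ) + 1, h⟩ - t m)
    (G : Matrix (Fin N) (Fin q) ℝ)
    (ϱ : ℝ → ℝ)
    (hϱ0 : ∀ s ∈ Set.Ici (0 : ℝ), 0 ≤ ϱ s)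
    (hϱanti : AntitoneOn ϱ (Set.Ici (0 : ℝ)))
    (hcorr : ∀ n m : Fin q, |∑ i, G i n * G i m| ≤ ϱ |t n - t m|)
    (hsum : Summable fun m : ℕ => ϱ ((m + 1) * Δ))
    (μ : ℝ) (hμ : μ = ϱ 0 + 2 * ∑' m : ℕ, ϱ ((m + 1) * Δ)) :
    ‖G‖ ^ 2 ≤ μ := by
  have hϱnat (k : ℕ) : 0 ≤ ϱ (k * Δ) := hϱ0 _ (Set.mem_Ici.2 (by positivity))
  have hrow (n : Fin q) : ∑ m, ϱ |t n - t m| ≤ μ :=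
    calc ∑ m, ϱ |t n - t m| ≤ ∑ m : Fin q, ϱ (((n : ℤ) - m).natAbs * Δ) := by
          gcongr with m
          have hsep' := Fin.abs_sub_mul_le_abs_sub_of_gap_le hsep n m
          rw [Nat.cast_natAbs]
          push_cast
          exact hϱanti (Set.mem_Ici.2 (by positivity)) (Set.mem_Ici.2 (abs_nonneg _)) hsep'
      _ ≤ ϱ ((0 : ℕ) * Δ) + 2 * ∑' k : ℕ, ϱ ((k + 1 : ℕ) * Δ) :=
          sum_fin_natAbs_sub_le_tsum (f := fun k : ℕ => ϱ (k * Δ)) hϱnat (by exact_mod_cast hsum) n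
      _ = μ := by simp [hμ]
  have hμ0 : 0 ≤ μ := by
    have : 0 ≤ ∑' k : ℕ, ϱ ((k + 1) * Δ) := tsum_nonneg fun k => by exact_mod_cast hϱnat (k + 1)
    linarith [hϱ0 0 (Set.mem_Ici.2 le_rfl)]
  refine l2_opNorm_sq_le_of_dotProduct_le hμ0
    (dotProduct_mulVec_le_of_abs_le (R := fun n m => ϱ |t n - t m|) hcorr hrow fun m => ?_)
  simpa only [abs_sub_comm] using hrow m

theorem coherence_gershgorin_bound
    {N q : ℕ} (Δ : ℝ) (hΔ : 0 < Δ)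
    (t : Fin q → ℝ) (ht : StrictMono t)
    (hsep : ∀ (m : Fin q) (h : (m : ℕ) + 1 < q), Δ ≤ t ⟨(m : ℕ) + 1, h⟩ - t m)
    (G : Matrix (Fin N) (Fin q) ℝ)
    (ϱ : ℝ → ℝ)
    (hϱ0 : ∀ s ∈ Set.Ici (0 : ℝ), 0 ≤ ϱ s)
    (hϱanti : AntitoneOn ϱ (Set.Ici (0 : ℝ)))
    (hcorr : ∀ n m : Fin q, |∑ i, G i n * G i m| ≤ ϱ |t n - t m|)
    (hsum : Summable fun m : ℕ => ϱ ((m + 1) * Δ))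
    (μ : ℝ) (hμ : μ = ϱ 0 + 2 * ∑' m : ℕ, ϱ ((m + 1) * Δ)) :
    ‖G‖ ^ 2 ≤ μ :=
  coherence_gershgorin_bound_general Δ hΔ t hsep G ϱ hϱ0 hϱanti hcorr hsum μ hμ
end

section
/- Let Δ > 0 and let ϱ : [0, ∞) → [0, ∞) be nonincreasing with convergent series μ := ϱ(0) + 2·Σ_{m=1}^∞ ϱ(mΔ). Let A = [A₁ A₂ … A_p] ∈ ℝ^{N×pq} be a horizontal concatenation of blocks A_i ∈ ℝ^{N×q}, where each block A_i has columns a_{i,1}, …, a_{i,q} satisfying |⟨a_{i,n}, a_{i,m}⟩| ≤ ϱ(|n − m|·Δ) for all n, m ∈ {1, …, q}. Then the spectral norm of A satisfies ‖A‖ ≤ √(p·μ). -/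
/-!
For one block `B`, the Gram matrix `Bᵀ B` has entries bounded by `ϱ(|n - m| Δ)`; reindexing by
`d = m - n ∈ ℤ`, each row and column sum is at most `Σ_{d ∈ ℤ} ϱ(|d| Δ) = μ`, so Schur's test gives
`‖B‖² = ‖Bᵀ B‖ ≤ μ`. For the concatenation, `A Aᵀ = Σᵢ Aᵢ Aᵢᵀ`, hence
`‖A‖² = ‖A Aᵀ‖ ≤ Σᵢ ‖Aᵢ‖² ≤ p μ`.
-/

open scoped Matrix.Norms.L2Operator

/-- Horizontal (column-block) concatenation `[A₁ A₂ … A_p]`. -/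
def hcat {N p q : ℕ} (A : Fin p → Matrix (Fin N) (Fin q) ℝ) :
    Matrix (Fin N) (Fin p × Fin q) ℝ :=
  Matrix.of fun n ik => A ik.1 n ik.2

open scoped Matrix

theorem HasSum.int_of_even {α : Type*} [AddCommMonoid α] [TopologicalSpace α] [ContinuousAdd α]
    {f : ℤ → α} (hf : f.Even) {s : α} (h : HasSum (fun k : ℕ => f (k + 1)) s) :
    HasSum f (f 0 + s + s) :=
  h.zero_add.of_nat_of_neg_add_one (by simpa only [hf _] using h)

noncomputable def coherence (ϱ : ℝ → ℝ) (Δ : ℝ) : ℝ :=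
  ϱ 0 + 2 * ∑' m : ℕ, ϱ ((m + 1) * Δ)

section Coherence

variable {ϱ : ℝ → ℝ} {Δ : ℝ}

theorem hasSum_coherence (hsum : Summable fun m : ℕ => ϱ ((m + 1) * Δ)) :
    HasSum (fun d : ℤ => ϱ (|(d : ℝ)| * Δ)) (coherence ϱ Δ) := by
  have h := HasSum.int_of_even (f := fun d : ℤ => ϱ (|(d : ℝ)| * Δ))
    (fun d => by simp only [Int.cast_neg, abs_neg]) (s := ∑' m : ℕ, ϱ ((m + 1) * Δ)) ?_
  · simpa only [coherence, Int.cast_zero, abs_zero, zero_mul, two_mul, add_assoc] using h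
  · convert hsum.hasSum using 3 with k
    push_cast
    rw [abs_of_nonneg (by positivity)]

theorem coherence_nonneg (hΔ : 0 ≤ Δ) (hϱ0 : ∀ s ∈ Set.Ici (0 : ℝ), 0 ≤ ϱ s)
    (hsum : Summable fun m : ℕ => ϱ ((m + 1) * Δ)) : 0 ≤ coherence ϱ Δ :=
  (hasSum_coherence hsum).nonneg fun _ => hϱ0 _ (Set.mem_Ici.mpr (by positivity))

theorem sum_le_coherence {q : ℕ} (hΔ : 0 ≤ Δ) (hϱ0 : ∀ s ∈ Set.Ici (0 : ℝ), 0 ≤ ϱ s)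
    (hsum : Summable fun m : ℕ => ϱ ((m + 1) * Δ)) (n : Fin q) :
    ∑ m : Fin q, ϱ (|(n : ℝ) - (m : ℝ)| * Δ) ≤ coherence ϱ Δ := by
  have hint := hasSum_coherence hsum
  have hinj : Function.Injective fun m : Fin q => (m : ℤ) - n := fun a b h => by
    simpa [Fin.ext_iff] using h
  calc ∑ m : Fin q, ϱ (|(n : ℝ) - (m : ℝ)| * Δ)
      = ∑' m : Fin q, ϱ (|(((m : ℤ) - n : ℤ) : ℝ)| * Δ) := by
        rw [tsum_fintype]
        push_cast
        simp only [abs_sub_comm]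
    _ ≤ ∑' d : ℤ, ϱ (|(d : ℝ)| * Δ) :=
        tsum_comp_le_tsum_of_inj hint.summable
          (fun _ => hϱ0 _ (Set.mem_Ici.mpr (by positivity))) hinj
    _ = coherence ϱ Δ := hint.tsum_eq

end Coherence

namespace Matrix

variable {m n : Type*} [Fintype m] [Fintype n]

theorem sum_sq_mulVec_le_of_abs_sum_le (M : Matrix m n ℝ) {r c : ℝ} (hr : 0 ≤ r)
    (hrow : ∀ i, ∑ j, |M i j| ≤ r) (hcol : ∀ j, ∑ i, |M i j| ≤ c) (x : n → ℝ) :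
    ∑ i, (M *ᵥ x) i ^ 2 ≤ r * c * ∑ j, x j ^ 2 := by
  have hcs : ∀ i, (M *ᵥ x) i ^ 2 ≤ (∑ j, |M i j|) * ∑ j, |M i j| * x j ^ 2 := fun i =>
    calc (M *ᵥ x) i ^ 2 ≤ (∑ j, |M i j| * |x j|) ^ 2 := by
          rw [← sq_abs]
          gcongr
          simpa only [mulVec, dotProduct, abs_mul] using
            Finset.abs_sum_le_sum_abs (fun j => M i j * x j) Finset.univ
      _ ≤ (∑ j, |M i j|) * ∑ j, |M i j| * x j ^ 2 :=
          Finset.sum_sq_le_sum_mul_sum_of_sq_le_mul _ (fun j _ => abs_nonneg _)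
            (fun j _ => by positivity) fun j _ => by
              rw [mul_pow, sq_abs (x j), sq |M i j|, mul_assoc]
  calc ∑ i, (M *ᵥ x) i ^ 2 ≤ ∑ i, r * ∑ j, |M i j| * x j ^ 2 :=
        Finset.sum_le_sum fun i _ => (hcs i).trans <|
          mul_le_mul_of_nonneg_right (hrow i) (by positivity)
    _ = r * ∑ j, (∑ i, |M i j|) * x j ^ 2 := by
        rw [← Finset.mul_sum, Finset.sum_comm]
        simp only [Finset.sum_mul]
    _ ≤ r * ∑ j, c * x j ^ 2 := by gcongr with j; exact hcol j
    _ = r * c * ∑ j, x j ^ 2 := by rw [← Finset.mul_sum, mul_assoc]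

theorem l2_opNorm_le_sqrt_of_abs_sum_le [DecidableEq n] (M : Matrix m n ℝ) {r c : ℝ}
    (hrow : ∀ i, ∑ j, |M i j| ≤ r) (hcol : ∀ j, ∑ i, |M i j| ≤ c) :
    ‖M‖ ≤ √(r * c) := by
  rcases isEmpty_or_nonempty m with hm | ⟨⟨i₀⟩⟩
  · simp [Subsingleton.elim M 0]
  have hr : 0 ≤ r := (Finset.sum_nonneg fun j _ => abs_nonneg (M i₀ j)).trans (hrow i₀)
  rw [l2_opNorm_def]
  refine ContinuousLinearMap.opNorm_le_bound _ (Real.sqrt_nonneg _) fun x => ?_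
  simp only [LinearEquiv.trans_apply, LinearMap.coe_toContinuousLinearMap', toLpLin_apply,
    EuclideanSpace.norm_eq, Real.norm_eq_abs, sq_abs]
  rw [← Real.sqrt_mul' _ (Finset.sum_nonneg fun j _ => sq_nonneg _)]
  exact Real.sqrt_le_sqrt (sum_sq_mulVec_le_of_abs_sum_le M hr hrow hcol x)

theorem l2_opNorm_mul_conjTranspose_self {𝕜 : Type*} [RCLike 𝕜] [DecidableEq m]
    [DecidableEq n] (A : Matrix m n 𝕜) : ‖A * Aᴴ‖ = ‖A‖ * ‖A‖ := by
  simpa only [conjTranspose_conjTranspose, l2_opNorm_conjTranspose] using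
    l2_opNorm_conjTranspose_mul_self Aᴴ

end Matrix

theorem l2_opNorm_mul_self_le_coherence {N q : ℕ} {ϱ : ℝ → ℝ} {Δ : ℝ} (hΔ : 0 ≤ Δ)
    (hϱ0 : ∀ s ∈ Set.Ici (0 : ℝ), 0 ≤ ϱ s) (hsum : Summable fun m : ℕ => ϱ ((m + 1) * Δ))
    (B : Matrix (Fin N) (Fin q) ℝ)
    (hcorr : ∀ n m : Fin q, |∑ j, B j n * B j m| ≤ ϱ (|(n : ℝ) - (m : ℝ)| * Δ)) :
    ‖B‖ * ‖B‖ ≤ coherence ϱ Δ := by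
  have hgram : ∀ n m, (Bᴴ * B) n m = ∑ j, B j n * B j m := fun n m => by
    simp [Matrix.mul_apply]
  have hrow : ∀ n, ∑ m, |(Bᴴ * B) n m| ≤ coherence ϱ Δ := fun n =>
    (Finset.sum_le_sum fun m _ => (hgram n m).symm ▸ hcorr n m).trans
      (sum_le_coherence hΔ hϱ0 hsum n)
  have hcol : ∀ m, ∑ n, |(Bᴴ * B) n m| ≤ coherence ϱ Δ := fun m => by
    simpa only [hgram, mul_comm (B _ m)] using hrow m
  rw [← Matrix.l2_opNorm_conjTranspose_mul_self,
    ← Real.sqrt_mul_self (coherence_nonneg hΔ hϱ0 hsum)]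
  exact (Bᴴ * B).l2_opNorm_le_sqrt_of_abs_sum_le hrow hcol

theorem hcat_mul_conjTranspose_self {N p q : ℕ} (A : Fin p → Matrix (Fin N) (Fin q) ℝ) :
    hcat A * (hcat A)ᴴ = ∑ i, A i * (A i)ᴴ := by
  ext j k
  simp [hcat, Matrix.mul_apply, Matrix.sum_apply, Fintype.sum_prod_type]

theorem coherence_bound_dictionary_general
    {N p q : ℕ} (Δ : ℝ) (hΔ : 0 < Δ)
    (ϱ : ℝ → ℝ)
    (hϱ0 : ∀ s ∈ Set.Ici (0 : ℝ), 0 ≤ ϱ s)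
    (hsum : Summable fun m : ℕ => ϱ ((m + 1) * Δ))
    (μ : ℝ) (hμ : μ = ϱ 0 + 2 * ∑' m : ℕ, ϱ ((m + 1) * Δ))
    (A : Fin p → Matrix (Fin N) (Fin q) ℝ)
    (hcorr : ∀ (i : Fin p) (n m : Fin q),
      |∑ j, A i j n * A i j m| ≤ ϱ (|(n : ℝ) - (m : ℝ)| * Δ)) :
    ‖hcat A‖ ≤ Real.sqrt (p * μ) := by
  have hblock : ∀ i, ‖A i‖ * ‖A i‖ ≤ μ := fun i =>
    hμ ▸ l2_opNorm_mul_self_le_coherence hΔ.le hϱ0 hsum (A i) (hcorr i)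
  refine Real.le_sqrt_of_sq_le ?_
  calc ‖hcat A‖ ^ 2 = ‖∑ i, A i * (A i)ᴴ‖ := by
        rw [sq, ← Matrix.l2_opNorm_mul_conjTranspose_self, hcat_mul_conjTranspose_self]
    _ ≤ ∑ i, ‖A i * (A i)ᴴ‖ := norm_sum_le _ _
    _ = ∑ i, ‖A i‖ * ‖A i‖ := by simp only [Matrix.l2_opNorm_mul_conjTranspose_self]
    _ ≤ ∑ _i : Fin p, μ := Finset.sum_le_sum fun i _ => hblock i
    _ = p * μ := by rw [Finset.sum_const, Finset.card_fin, nsmul_eq_mul]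

theorem coherence_bound_dictionary
    {N p q : ℕ} (Δ : ℝ) (hΔ : 0 < Δ)
    (ϱ : ℝ → ℝ)
    (hϱ0 : ∀ s ∈ Set.Ici (0 : ℝ), 0 ≤ ϱ s)
    (hϱanti : AntitoneOn ϱ (Set.Ici (0 : ℝ)))
    (hsum : Summable fun m : ℕ => ϱ ((m + 1) * Δ))
    (μ : ℝ) (hμ : μ = ϱ 0 + 2 * ∑' m : ℕ, ϱ ((m + 1) * Δ))
    (A : Fin p → Matrix (Fin N) (Fin q) ℝ)
    (hcorr : ∀ (i : Fin p) (n m : Fin q),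
      |∑ j, A i j n * A i j m| ≤ ϱ (|(n : ℝ) - (m : ℝ)| * Δ)) :
    ‖hcat A‖ ≤ Real.sqrt (p * μ) :=
  coherence_bound_dictionary_general Δ hΔ ϱ hϱ0 hsum μ hμ A hcorr
end
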